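/- arXiv:1907.02712 — 6 statements merged into one kernel-verified Lean document; each statement's English description precedes it below -/
import Mathlib

section
/- Let k ≥ 1, let z_k be any solution of the local minimization step min{ I(t_{k−1},z) + R(z − z_{k−1}) : z ∈ Z, ‖z − z_{k−1}‖_V ≤ τ } with associated time t_k = min{t_{k−1} + τ − ‖z_k − z_{k−1}‖_V, T}. Then there exists a Lagrange multiplier λ_k ≥ 0 such that: (i) λ_k(‖z_k − z_{k−1}‖_V − τ) = 0; (ii) τ · dist_{V*}(−D_zI(t_{k−1},z_k), ∂R(0)) = λ_k ‖z_k − z_{k−1}‖_V²; (iii) R(z_k − z_{k−1}) + τ · dist_{V*}(−D_zI(t_{k−1},z_k), ∂R(0)) = ⟨−D_zI(t_{k−1},z_k), z_k − z_{k−1}⟩_{Z*,Z}; (iv) R(v) ≥ −⟨λ_k J_V(z_k − z_{k−1}) + D_zI(t_{k−1},z_k), v⟩_{V*,V} for all v ∈ V, where J_V denotes the Riesz isomorphism of V. In particular, 0 ∈ ∂R(z_k − z_{k−1}) + λ_k J_V(z_k − z_{k−1}) + D_zI(t_{k−1},z_k) and λ_k = τ^{−1} dist_{V*}(−D_zI(t_{k−1},z_k),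 ∂R(0)). -/
open MeasureTheory
open scoped RealInnerProductSpace NNReal

noncomputable section

namespace RIS

variable {Z V X : Type*}
  [NormedAddCommGroup Z] [InnerProductSpace ℝ Z] [CompleteSpace Z]
  [NormedAddCommGroup V] [InnerProductSpace ℝ V] [CompleteSpace V]
  [NormedAddCommGroup X] [NormedSpace ℝ X]

/-- The convex subdifferential of `R : V → ℝ` at `u`, as a subset of the dual `V →L[ℝ] ℝ`. -/
def subdiff (R : V → ℝ) (u : V) : Set (V →L[ℝ] ℝ) :=
  {ξ | ∀ v : V, R u + ξ (v - u) ≤ R v}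

/-- The semilinear energy `I(t,z) = ½⟨Az,z⟩ + F(z) − ⟨ℓ(t), z⟩`. -/
def energy (A : Z →L[ℝ] Z →L[ℝ] ℝ) (F : Z → ℝ) (ℓ : ℝ → V →L[ℝ] ℝ)
    (ι : Z →L[ℝ] V) (t : ℝ) (z : Z) : ℝ :=
  (1 / 2 : ℝ) * A z z + F z - ℓ t (ι z)

/-- `D_z I(t,z) = Az + D_zF(z) − ℓ(t)`, as an element of `Z*` (here `D_zF(z)` and `ℓ(t)`
are elements of `V*`, composed with the embedding `ι : Z ↪ V`). -/
def DI (A : Z →L[ℝ] Z →L[ℝ] ℝ) (DF : Z → V →L[ℝ] ℝ) (ℓ : ℝ → V →L[ℝ] ℝ)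
    (ι : Z →L[ℝ] V) (t : ℝ) (z : Z) : Z →L[ℝ] ℝ :=
  A z + (DF z).comp ι - (ℓ t).comp ι

/-- Local stability: `0 ∈ ∂R(0) + D_z I(t,z)`. -/
def LocStable (R : V → ℝ) (A : Z →L[ℝ] Z →L[ℝ] ℝ) (DF : Z → V →L[ℝ] ℝ)
    (ℓ : ℝ → V →L[ℝ] ℝ) (ι : Z →L[ℝ] V) (t : ℝ) (z : Z) : Prop :=
  ∃ ξ ∈ subdiff R 0, ξ.comp ι + DI A DF ℓ ι t z = 0

/-- The local incremental minimization scheme with step size `τ`: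
`z_{k+1}` minimizes `I(t_k, ·) + R(· − z_k)` over the ball `‖· − z_k‖_V ≤ τ`
and `t_{k+1} = min{t_k + τ − ‖z_{k+1} − z_k‖_V, T}`, starting from `t_0 = 0`, `z_0 = z₀`. -/
def Scheme (A : Z →L[ℝ] Z →L[ℝ] ℝ) (F : Z → ℝ) (R : V → ℝ) (ℓ : ℝ → V →L[ℝ] ℝ)
    (ι : Z →L[ℝ] V) (T τ : ℝ) (z₀ : Z) (t : ℕ → ℝ) (z : ℕ → Z) : Prop :=
  t 0 = 0 ∧ z 0 = z₀ ∧
    ∀ k : ℕ,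
      ‖ι (z (k + 1) - z k)‖ ≤ τ ∧
      (∀ w : Z, ‖ι (w - z k)‖ ≤ τ →
        energy A F ℓ ι (t k) (z (k + 1)) + R (ι (z (k + 1) - z k)) ≤
          energy A F ℓ ι (t k) w + R (ι (w - z k))) ∧
      t (k + 1) = min (t k + τ - ‖ι (z (k + 1) - z k)‖) T

/-- Standing assumptions on the data of the rate-independent system. -/
def StandingAssumptions (ι : Z →L[ℝ] V) (ιX : V →L[ℝ] X)
    (A : Z →L[ℝ] Z →L[ℝ] ℝ) (α : ℝ) (F : Z → ℝ) (DF : Z → V →L[ℝ] ℝ)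
    (D2F : Z → Z →L[ℝ] V →L[ℝ] ℝ) (R : V → ℝ) (ℓ : ℝ → V →L[ℝ] ℝ)
    (L T : ℝ) : Prop :=
  Function.Injective (ι : Z → V) ∧ DenseRange (ι : Z → V) ∧ (∀ w : Z, ‖ι w‖ ≤ ‖w‖) ∧
  Function.Injective (ιX : V → X) ∧
  (∀ z w : Z, A z w = A w z) ∧ 0 < α ∧ (∀ w : Z, α * ‖w‖ ^ 2 ≤ A w w) ∧
  (∀ w : Z, 0 ≤ F w) ∧
  (∀ w : Z, HasFDerivAt F ((DF w).comp ι) w) ∧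
  (∀ w : Z, HasFDerivAt DF (D2F w) w) ∧
  (∃ CF q : ℝ, 0 < CF ∧ 1 ≤ q ∧ ∀ w v : Z, ‖D2F w v‖ ≤ CF * (1 + ‖w‖ ^ q) * ‖v‖) ∧
  0 ≤ L ∧ LipschitzOnWith (Real.toNNReal L) ℓ (Set.Icc 0 T) ∧ 0 < T ∧
  ConvexOn ℝ Set.univ R ∧ LowerSemicontinuous R ∧ (∀ v : V, 0 ≤ R v) ∧
  (∀ (c : ℝ) (v : V), 0 ≤ c → R (c • v) = c * R v) ∧
  (∃ ρ₁ ρ₂ : ℝ, 0 < ρ₁ ∧ 0 < ρ₂ ∧ ∀ v : V, ρ₁ * ‖ιX v‖ ≤ R v ∧ R v ≤ ρ₂ * ‖v‖)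

/-- `κ`-uniform convexity of the energy: `⟨D²_zI(t,z)v,v⟩ ≥ κ‖v‖²_Z`, where
`D²_zI(t,z)[v,v] = ⟨Av,v⟩ + ⟨D²F(z)v, v⟩`. -/
def UniformlyConvex (A : Z →L[ℝ] Z →L[ℝ] ℝ) (D2F : Z → Z →L[ℝ] V →L[ℝ] ℝ)
    (ι : Z →L[ℝ] V) (κ : ℝ) : Prop :=
  0 < κ ∧ ∀ w v : Z, κ * ‖v‖ ^ 2 ≤ A v v + D2F w v (ι v)

/-- A differential solution of the rate-independent system: `y ∈ W^{1,1}(0,T;Z)`,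
`y(0) = z₀` and `0 ∈ ∂R(y'(t)) + D_zI(t, y(t))` for a.e. `t ∈ (0,T)`. -/
def IsDiffSol (A : Z →L[ℝ] Z →L[ℝ] ℝ) (DF : Z → V →L[ℝ] ℝ) (ℓ : ℝ → V →L[ℝ] ℝ)
    (R : V → ℝ) (ι : Z →L[ℝ] V) (T : ℝ) (z₀ : Z) (y : ℝ → Z) : Prop :=
  y 0 = z₀ ∧
  ∃ y' : ℝ → Z,
    IntervalIntegrable y' volume 0 T ∧
    (∀ s ∈ Set.Icc (0 : ℝ) T, y s = z₀ + ∫ r in (0 : ℝ)..s, y' r) ∧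
    (∀ᵐ s ∂(volume.restrict (Set.Ioo (0 : ℝ) T)),
      ∃ ξ ∈ subdiff R (ι (y' s)), ξ.comp ι + DI A DF ℓ ι s (y s) = 0)


section Helpers

omit [CompleteSpace Z] [CompleteSpace V] in
lemma energy_hasFDerivAt (A : Z →L[ℝ] Z →L[ℝ] ℝ) (F : Z → ℝ) (DF : Z → V →L[ℝ] ℝ)
    (ℓ : ℝ → V →L[ℝ] ℝ) (ι : Z →L[ℝ] V) (t : ℝ)
    (hsym : ∀ z w : Z, A z w = A w z)
    (hF : ∀ w : Z, HasFDerivAt F ((DF w).comp ι) w) (ζ : Z) :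
    HasFDerivAt (energy A F ℓ ι t) (DI A DF ℓ ι t ζ) ζ := by
  have hb := (A.isBoundedBilinearMap).hasFDerivAt (ζ, ζ)
  have hd : HasFDerivAt (fun z : Z => (z, z))
      ((ContinuousLinearMap.id ℝ Z).prod (ContinuousLinearMap.id ℝ Z)) ζ :=
    ((hasFDerivAt_id ζ).prodMk (hasFDerivAt_id ζ))
  have h1 := HasFDerivAt.comp (f := fun z : Z => (z, z)) ζ hb hd
  have h2 : HasFDerivAt (fun z : Z => (1/2 : ℝ) * A z z)
      ((1/2 : ℝ) • (((A.isBoundedBilinearMap).deriv (ζ, ζ)).comp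
        ((ContinuousLinearMap.id ℝ Z).prod (ContinuousLinearMap.id ℝ Z)))) ζ := h1.const_mul _
  have h3 : HasFDerivAt (fun z : Z => ℓ t (ι z)) ((ℓ t).comp ι) ζ :=
    ((ℓ t).comp ι).hasFDerivAt
  have h4 := (h2.add (hF ζ)).sub h3
  have heq : (1/2 : ℝ) • (((A.isBoundedBilinearMap).deriv (ζ, ζ)).comp
        ((ContinuousLinearMap.id ℝ Z).prod (ContinuousLinearMap.id ℝ Z))) + (DF ζ).comp ι
        - (ℓ t).comp ι = DI A DF ℓ ι t ζ := by
    ext v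
    simp [DI, IsBoundedBilinearMap.deriv_apply, hsym v ζ]
    ring
  rw [heq] at h4
  exact h4

lemma right_deriv_nonneg {ψ : ℝ → ℝ} {m : ℝ} (h : HasDerivAt ψ m 0)
    (hmin : ∀ᶠ s in nhdsWithin (0:ℝ) (Set.Ioi 0), ψ 0 ≤ ψ s) : 0 ≤ m := by
  have ht' : Filter.Tendsto (slope ψ 0) (nhdsWithin 0 (Set.Ioi 0)) (nhds m) :=
    (hasDerivAt_iff_tendsto_slope.mp h).mono_left
      (nhdsWithin_mono _ (fun x hx => ne_of_gt hx))
  refine ge_of_tendsto ht' ?_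
  filter_upwards [hmin, self_mem_nhdsWithin] with s hs hs'
  have : (0:ℝ) < s := hs'
  rw [slope_def_field]
  apply div_nonneg <;> simp <;> linarith

omit [CompleteSpace Z] in
lemma line_hasDerivAt (zk : Z) (d : Z) :
    HasDerivAt (fun s : ℝ => zk + s • d) d 0 := by
  simpa using ((hasDerivAt_id (0:ℝ)).smul_const d).const_add zk

omit [CompleteSpace Z] in
lemma comp_line_hasDerivAt {E : Z → ℝ} {D : Z →L[ℝ] ℝ} {zk : Z}
    (hE : HasFDerivAt E D zk) (d : Z) :
    HasDerivAt (fun s : ℝ => E (zk + s • d)) (D d) 0 := by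
  have hE' : HasFDerivAt E D (zk + (0:ℝ) • d) := by simpa using hE
  exact hE'.comp_hasDerivAt 0 (line_hasDerivAt zk d)

omit [CompleteSpace V] in
lemma R_subadd {R : V → ℝ} (hconv : ConvexOn ℝ Set.univ R)
    (hhom : ∀ (c : ℝ) (v : V), 0 ≤ c → R (c • v) = c * R v) (a b : V) :
    R (a + b) ≤ R a + R b := by
  have h := hconv.2 (Set.mem_univ a) (Set.mem_univ b)
    (by norm_num : (0:ℝ) ≤ 1/2) (by norm_num : (0:ℝ) ≤ 1/2) (by norm_num)
  have h2 : R (a + b) = 2 * R ((1/2 : ℝ) • a + (1/2 : ℝ) • b) := by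
    rw [← smul_add]
    have := hhom 2 ((1/2 : ℝ) • (a + b)) (by norm_num)
    rw [smul_smul] at this
    norm_num at this ⊢
    rw [this]
  simp only [smul_eq_mul] at h
  rw [h2]; linarith

omit [CompleteSpace V] in
lemma R_continuous {R : V → ℝ} (hconv : ConvexOn ℝ Set.univ R)
    (hhom : ∀ (c : ℝ) (v : V), 0 ≤ c → R (c • v) = c * R v)
    {ρ₂ : ℝ} (hub : ∀ v : V, R v ≤ ρ₂ * ‖v‖) : Continuous R := by
  have key : ∀ a b : V, R a - R b ≤ ρ₂ * ‖a - b‖ := by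
    intro a b
    have := R_subadd hconv hhom b (a - b)
    simp only [add_sub_cancel] at this
    have h2 := hub (a - b)
    linarith
  have key2 : ∀ a b : V, |R a - R b| ≤ ρ₂ * ‖a - b‖ := by
    intro a b
    rw [abs_sub_le_iff]
    refine ⟨key a b, ?_⟩
    have := key b a
    rwa [norm_sub_rev] at this
  refine (lipschitzWith_iff_dist_le_mul (K := ρ₂.toNNReal)).2 ?_ |>.continuous
  intro a b
  rw [Real.dist_eq, dist_eq_norm, Real.coe_toNNReal']
  calc |R a - R b| ≤ ρ₂ * ‖a - b‖ := key2 a b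
    _ ≤ max ρ₂ 0 * ‖a - b‖ :=
        mul_le_mul_of_nonneg_right (le_max_left _ _) (norm_nonneg _)

omit [CompleteSpace Z] [CompleteSpace V] in
lemma exists_factorization (ι : Z →L[ℝ] V) (hinj : Function.Injective (ι : Z → V))
    (g : Z →L[ℝ] ℝ) (C : ℝ) (hC : ∀ w : Z, |g w| ≤ C * ‖ι w‖) :
    ∃ η : V →L[ℝ] ℝ, η.comp ι = g := by
  set p : Submodule ℝ V := LinearMap.range (ι.toLinearMap) with hp
  set e : Z ≃ₗ[ℝ] p := LinearEquiv.ofInjective ι.toLinearMap hinj with he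
  have hcoe : ∀ w : Z, ((e w : p) : V) = ι w := fun w => rfl
  set f₀ : p →ₗ[ℝ] ℝ := (g : Z →ₗ[ℝ] ℝ).comp (e.symm : p →ₗ[ℝ] Z) with hf
  have hbound : ∀ x : p, ‖f₀ x‖ ≤ C * ‖x‖ := by
    intro x
    have hx : ((x : V)) = ι (e.symm x) := by
      conv_lhs => rw [← e.apply_symm_apply x]
      exact hcoe _
    have : f₀ x = g (e.symm x) := rfl
    rw [this]
    calc ‖g (e.symm x)‖ = |g (e.symm x)| := rfl
      _ ≤ C * ‖ι (e.symm x)‖ := hC _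
      _ = C * ‖x‖ := by rw [← hx]; rfl
  set f : p →L[ℝ] ℝ := f₀.mkContinuous C hbound with hfc
  obtain ⟨η, hη, -⟩ := exists_extension_norm_eq p f
  refine ⟨η, ?_⟩
  ext w
  have := hη (e w)
  simp only [ContinuousLinearMap.comp_apply]
  rw [show ι w = ((e w : p) : V) from rfl, this]
  show f₀ (e w) = g w
  rw [hf]
  simp

omit [CompleteSpace Z] [CompleteSpace V] in
lemma variation_N {E : Z → ℝ} {D : Z →L[ℝ] ℝ} {R : V → ℝ} (ι : Z →L[ℝ] V)
    (hhom : ∀ (c : ℝ) (v : V), 0 ≤ c → R (c • v) = c * R v)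
    {τ : ℝ} (zj zk : Z)
    (hE : HasFDerivAt E D zk)
    (hmin : ∀ w : Z, ‖ι (w - zj)‖ ≤ τ → E zk + R (ι (zk - zj)) ≤ E w + R (ι (w - zj)))
    (hle : ‖ι (zk - zj)‖ ≤ τ) :
    D (zk - zj) + R (ι (zk - zj)) ≤ 0 := by
  set u := ι (zk - zj) with hu
  have hψ' : HasDerivAt (fun s : ℝ => E (zk + s • (zj - zk)) - s * R u)
      (D (zj - zk) - R u) 0 :=
    (comp_line_hasDerivAt hE (zj - zk)).sub
      (by simpa using (hasDerivAt_id (0:ℝ)).mul_const (R u))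
  have heq : ∀ s : ℝ, zk + s • (zj - zk) - zj = (1 - s) • (zk - zj) := by
    intro s; module
  have hm := right_deriv_nonneg hψ' ?_
  · have hneg : D (zj - zk) = -D (zk - zj) := by
      rw [← map_neg]; congr 1; abel
    rw [hneg] at hm; linarith
  · filter_upwards [Ioo_mem_nhdsGT_of_mem
      (Set.mem_Ico.mpr ⟨le_rfl, one_pos⟩)] with s hs
    obtain ⟨hs0, hs1⟩ := hs
    have hfeas : ‖ι ((zk + s • (zj - zk)) - zj)‖ ≤ τ := by
      rw [heq s, _root_.map_smul, norm_smul]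
      simp only [Real.norm_eq_abs, abs_of_nonneg (by linarith : (0:ℝ) ≤ 1 - s)]
      calc (1 - s) * ‖u‖ ≤ 1 * τ :=
            mul_le_mul (by linarith) hle (norm_nonneg _) (by norm_num)
        _ = τ := one_mul τ
    have h2 := hmin _ hfeas
    rw [heq s, _root_.map_smul, hhom (1 - s) u (by linarith)] at h2
    simp only [smul_eq_mul, zero_smul, add_zero, zero_mul, sub_zero]
    nlinarith [h2]

omit [CompleteSpace Z] [CompleteSpace V] in
lemma variation_interior {E : Z → ℝ} {D : Z →L[ℝ] ℝ} {R : V → ℝ} (ι : Z →L[ℝ] V)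
    (hsub : ∀ a b : V, R (a + b) ≤ R a + R b)
    (hhom : ∀ (c : ℝ) (v : V), 0 ≤ c → R (c • v) = c * R v)
    {τ : ℝ} (zj zk : Z)
    (hE : HasFDerivAt E D zk)
    (hmin : ∀ w : Z, ‖ι (w - zj)‖ ≤ τ → E zk + R (ι (zk - zj)) ≤ E w + R (ι (w - zj)))
    (hlt : ‖ι (zk - zj)‖ < τ) (w : Z) :
    0 ≤ D w + R (ι w) := by
  set u := ι (zk - zj) with hu
  have hψ' : HasDerivAt (fun s : ℝ => E (zk + s • w) + s * R (ι w))
      (D w + R (ι w)) 0 :=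
    (comp_line_hasDerivAt hE w).add
      (by simpa using (hasDerivAt_id (0:ℝ)).mul_const (R (ι w)))
  have hm := right_deriv_nonneg hψ' ?_
  · simpa using hm
  · set ε := (τ - ‖u‖) / (‖ι w‖ + 1) with hε
    have hεpos : 0 < ε := div_pos (by linarith) (by positivity)
    filter_upwards [Ioo_mem_nhdsGT_of_mem
      (Set.mem_Ico.mpr ⟨le_rfl, hεpos⟩)] with s hs
    obtain ⟨hs0, hs1⟩ := hs
    have heq : (zk + s • w) - zj = (zk - zj) + s • w := by module
    have hfeas : ‖ι ((zk + s • w) - zj)‖ ≤ τ := by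
      rw [heq, map_add, _root_.map_smul]
      calc ‖u + s • ι w‖ ≤ ‖u‖ + ‖s • ι w‖ := norm_add_le _ _
        _ = ‖u‖ + s * ‖ι w‖ := by
            rw [norm_smul, Real.norm_eq_abs, abs_of_pos hs0]
        _ ≤ ‖u‖ + s * (‖ι w‖ + 1) := by nlinarith
        _ ≤ ‖u‖ + ε * (‖ι w‖ + 1) := by
            nlinarith [mul_pos (by linarith : (0:ℝ) < ε - s)
              (by positivity : (0:ℝ) < ‖ι w‖ + 1)]
        _ = ‖u‖ + (τ - ‖u‖) := by rw [hε]; field_simp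
        _ = τ := by ring
    have h2 := hmin _ hfeas
    rw [heq, map_add, _root_.map_smul] at h2
    have h3 : R (u + s • ι w) ≤ R u + s * R (ι w) := by
      calc R (u + s • ι w) ≤ R u + R (s • ι w) := hsub _ _
        _ = R u + s * R (ι w) := by rw [hhom s _ (le_of_lt hs0)]
    simp only [zero_smul, add_zero, zero_mul]
    linarith

omit [CompleteSpace Z] [CompleteSpace V] in
lemma variation_boundary {E : Z → ℝ} {D : Z →L[ℝ] ℝ} {R : V → ℝ} (ι : Z →L[ℝ] V)
    (hsub : ∀ a b : V, R (a + b) ≤ R a + R b)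
    (hhom : ∀ (c : ℝ) (v : V), 0 ≤ c → R (c • v) = c * R v)
    {τ : ℝ} (hτ : 0 < τ) (zj zk : Z)
    (hE : HasFDerivAt E D zk)
    (hmin : ∀ w : Z, ‖ι (w - zj)‖ ≤ τ → E zk + R (ι (zk - zj)) ≤ E w + R (ι (w - zj)))
    (hnorm : ‖ι (zk - zj)‖ = τ) (w : Z) :
    0 ≤ D w + R (ι w) -
      (⟪ι (zk - zj), ι w⟫ / τ ^ 2) * (D (zk - zj) + R (ι (zk - zj))) := by
  set u := ι (zk - zj) with hu
  set b := ⟪u, ι w⟫ with hb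
  set q : ℝ → ℝ := fun s => τ ^ 2 + 2 * b * s + ‖ι w‖ ^ 2 * s ^ 2 with hqdef
  have hq0 : q 0 = τ ^ 2 := by simp [hqdef]
  have hqnorm : ∀ s : ℝ, ‖u + s • ι w‖ = Real.sqrt (q s) := by
    intro s
    have h1 : ‖u + s • ι w‖ ^ 2 = q s := by
      rw [norm_add_sq_real, real_inner_smul_right, norm_smul, hnorm]
      simp only [Real.norm_eq_abs, mul_pow, sq_abs, hqdef]
      ring
    rw [← h1, Real.sqrt_sq (norm_nonneg _)]
  set r : ℝ → ℝ := fun s => τ / Real.sqrt (q s) with hrdef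
  have hst : Real.sqrt (q 0) = τ := by rw [hq0]; exact Real.sqrt_sq hτ.le
  have hr0 : r 0 = 1 := by rw [hrdef]; simp only [hst]; field_simp
  have hq' : HasDerivAt q (2 * b) 0 := by
    have h1 : HasDerivAt (fun s : ℝ => 2 * b * s) (2 * b) 0 := by
      simpa using (hasDerivAt_id (0:ℝ)).const_mul (2 * b)
    have h2 : HasDerivAt (fun s : ℝ => ‖ι w‖ ^ 2 * s ^ 2) (0:ℝ) 0 := by
      simpa using (hasDerivAt_pow 2 (0:ℝ)).const_mul (‖ι w‖ ^ 2)
    have h3 := (h1.add h2).const_add (τ ^ 2)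
    have he : q = fun x : ℝ => τ ^ 2 + (2 * b * x + ‖ι w‖ ^ 2 * x ^ 2) := by
      funext x; rw [hqdef]; ring
    rw [he]; simpa using h3
  have hsq : HasDerivAt (fun s => Real.sqrt (q s)) (2 * b / (2 * Real.sqrt (q 0))) 0 :=
    hq'.sqrt (by rw [hq0]; positivity)
  have hrd : HasDerivAt r (-(b / τ ^ 2)) 0 := by
    have hinv := (hsq.inv (by rw [hst]; exact hτ.ne')).const_mul τ
    convert hinv using 1
    · rfl
    · rfl
    · rfl
    rw [hst]
    field_simp
  have hc : HasDerivAt (fun s : ℝ => (zk - zj) + s • w) w 0 := line_hasDerivAt (zk - zj) w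
  have hγ : HasDerivAt (fun s : ℝ => zj + r s • ((zk - zj) + s • w))
      ((-(b / τ ^ 2)) • (zk - zj) + w) 0 := by
    have h := (hrd.smul hc).const_add zj
    convert h using 1
    · rfl
    rw [hr0]; module
  have hγ0 : zj + r 0 • ((zk - zj) + (0:ℝ) • w) = zk := by
    simp [hr0]
  have hE' : HasFDerivAt E D (zj + r 0 • ((zk - zj) + (0:ℝ) • w)) := by rw [hγ0]; exact hE
  have hEγ : HasDerivAt (fun s : ℝ => E (zj + r s • ((zk - zj) + s • w)))
      (D ((-(b / τ ^ 2)) • (zk - zj) + w)) 0 :=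
    hE'.comp_hasDerivAt 0 hγ
  have hψ' : HasDerivAt
      (fun s : ℝ => E (zj + r s • ((zk - zj) + s • w)) + (r s - 1) * R u + (r s * s) * R (ι w))
      (D ((-(b / τ ^ 2)) • (zk - zj) + w) + (-(b / τ ^ 2)) * R u + R (ι w)) 0 := by
    have h1 := (hrd.sub_const 1).mul_const (R u)
    have h2 := (hrd.mul (hasDerivAt_id (0:ℝ))).mul_const (R (ι w))
    have := (hEγ.add h1).add h2
    exact this.congr_deriv (by simp [hr0])
  have hm := right_deriv_nonneg hψ' ?_
  · have hDlin : D ((-(b / τ ^ 2)) • (zk - zj) + w)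
        = -(b / τ ^ 2) * D (zk - zj) + D w := by
      rw [map_add, _root_.map_smul]; simp
    rw [hDlin] at hm
    nlinarith [hm]
  · set ε := min 1 (τ ^ 2 / (2 * |b| + ‖ι w‖ ^ 2 + 1)) with hε
    have hεpos : 0 < ε := lt_min one_pos (by positivity)
    filter_upwards [Ioo_mem_nhdsGT_of_mem (Set.mem_Ico.mpr ⟨le_rfl, hεpos⟩)] with s hs
    obtain ⟨hs0, hs1⟩ := hs
    have hs1' : s < 1 := lt_of_lt_of_le hs1 (min_le_left _ _)
    have hs2 : s < τ ^ 2 / (2 * |b| + ‖ι w‖ ^ 2 + 1) := lt_of_lt_of_le hs1 (min_le_right _ _)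
    have hqpos : 0 < q s := by
      have habs : -(|b|) ≤ b := neg_abs_le b
      have h1 : s * (2 * |b| + ‖ι w‖ ^ 2 + 1) < τ ^ 2 :=
        (lt_div_iff₀ (by positivity)).mp hs2
      simp only [hqdef]
      nlinarith [mul_le_mul_of_nonneg_left habs (by linarith : (0:ℝ) ≤ 2*s),
        mul_nonneg (mul_nonneg hs0.le hs0.le) (sq_nonneg ‖ι w‖),
        mul_nonneg hs0.le (sq_nonneg ‖ι w‖), sq_nonneg s]
    have hsqpos : 0 < Real.sqrt (q s) := Real.sqrt_pos.mpr hqpos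
    have hrpos : 0 < r s := div_pos hτ hsqpos
    have hιγ : ι ((zj + r s • ((zk - zj) + s • w)) - zj) = r s • (u + s • ι w) := by
      rw [add_sub_cancel_left, _root_.map_smul, map_add, _root_.map_smul]
    have hnormγ : ‖ι ((zj + r s • ((zk - zj) + s • w)) - zj)‖ = τ := by
      rw [hιγ, norm_smul, Real.norm_eq_abs, abs_of_pos hrpos, hqnorm s, hrdef]
      field_simp
    have h2 := hmin _ (le_of_eq hnormγ)
    rw [hιγ] at h2
    have h3 : R (r s • (u + s • ι w)) ≤ r s * (R u + s * R (ι w)) := by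
      rw [hhom _ _ hrpos.le]
      apply mul_le_mul_of_nonneg_left _ hrpos.le
      calc R (u + s • ι w) ≤ R u + R (s • ι w) := hsub _ _
        _ = R u + s * R (ι w) := by rw [hhom s _ hs0.le]
    have h3' : r s * (R u + s * R (ι w)) = r s * R u + r s * s * R (ι w) := by ring
    have key : E zk ≤ E (zj + r s • ((zk - zj) + s • w))
        + (r s - 1) * R u + (r s * s) * R (ι w) := by linarith
    simpa [hγ0, hr0] using key

end Helpers

set_option maxHeartbeats 2000000 in
/-- Discrete optimality system, Lemma 2.2:
any solution `z_k` of the `k`-th local minimization step admits a Lagrange multiplier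
`λ_k ≥ 0` (and a representative `η ∈ V*` of `D_zI(t_{k−1}, z_k)`) satisfying the
complementarity and optimality relations (i)–(iv), the inclusion
`0 ∈ ∂R(z_k − z_{k−1}) + λ_k J_V(z_k − z_{k−1}) + D_zI(t_{k−1},z_k)` and
`λ_k = τ⁻¹ dist_{V*}(−D_zI(t_{k−1},z_k), ∂R(0))`. -/
theorem statement0
    (ι : Z →L[ℝ] V) (ιX : V →L[ℝ] X)
    (A : Z →L[ℝ] Z →L[ℝ] ℝ) (α : ℝ) (F : Z → ℝ) (DF : Z → V →L[ℝ] ℝ)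
    (D2F : Z → Z →L[ℝ] V →L[ℝ] ℝ) (R : V → ℝ) (ℓ : ℝ → V →L[ℝ] ℝ) (L T : ℝ)
    (hstand : StandingAssumptions ι ιX A α F DF D2F R ℓ L T)
    (τ : ℝ) (hτ : 0 < τ) (z₀ : Z) (t : ℕ → ℝ) (z : ℕ → Z)
    (hscheme : Scheme A F R ℓ ι T τ z₀ t z)
    (k : ℕ) (hk : 1 ≤ k) :
    ∃ (lam : ℝ) (η : V →L[ℝ] ℝ), 0 ≤ lam ∧
      η.comp ι = DI A DF ℓ ι (t (k - 1)) (z k) ∧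
      lam * (‖ι (z k - z (k - 1))‖ - τ) = 0 ∧
      τ * Metric.infDist (-η) (subdiff R 0) = lam * ‖ι (z k - z (k - 1))‖ ^ 2 ∧
      R (ι (z k - z (k - 1))) + τ * Metric.infDist (-η) (subdiff R 0) =
        -(DI A DF ℓ ι (t (k - 1)) (z k)) (z k - z (k - 1)) ∧
      (∀ v : V, -(lam * (innerSL ℝ (ι (z k - z (k - 1))) v) + η v) ≤ R v) ∧
      (∃ ξ ∈ subdiff R (ι (z k - z (k - 1))),
        ξ + lam • innerSL ℝ (ι (z k - z (k - 1))) + η = 0) ∧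
      lam = τ⁻¹ * Metric.infDist (-η) (subdiff R 0) := by
  obtain ⟨hinj, hdense, hembed, hinjX, hsym, hα, hcoer, hFnn, hDFd, hD2F, hCF,
    hL0, hLip, hT, hconv, hlsc, hRnn, hhom, ρ₁, ρ₂, hρ₁, hρ₂, hρ⟩ := hstand
  obtain ⟨j, rfl⟩ : ∃ j, k = j + 1 := ⟨k - 1, by omega⟩
  simp only [Nat.add_sub_cancel]
  obtain ⟨-, -, hstep⟩ := hscheme
  obtain ⟨hball, hminw, -⟩ := hstep j
  set t' := t j with ht'
  set zk := z (j + 1) with hzk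
  set zj := z j with hzj
  set D := DI A DF ℓ ι t' zk with hD
  have hE : HasFDerivAt (energy A F ℓ ι t') D zk :=
    energy_hasFDerivAt A F DF ℓ ι t' hsym hDFd zk
  set u := ι (zk - zj) with hu
  have hub : ∀ v : V, R v ≤ ρ₂ * ‖v‖ := fun v => (hρ v).2
  have hsub : ∀ a b : V, R (a + b) ≤ R a + R b := R_subadd hconv hhom
  have hR0 : R 0 = 0 := by have := hhom 0 0 le_rfl; simpa using this
  have hle : ‖u‖ ≤ τ := by
    rw [hu, _root_.map_sub]; rw [← _root_.map_sub]; exact hball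
  have hN : D (zk - zj) + R u ≤ 0 := variation_N ι hhom zj zk hE hminw hle
  set lam := -(D (zk - zj) + R u) / τ ^ 2 with hlam
  have hlamnn : 0 ≤ lam := div_nonneg (by linarith) (by positivity)
  have hlamτ2 : lam * τ ^ 2 = -(D (zk - zj) + R u) := by
    rw [hlam]; field_simp
  have hKcomp : (∀ w : Z, 0 ≤ D w + R (ι w) + lam * ⟪u, ι w⟫) ∧ lam * (‖u‖ - τ) = 0 := by
    rcases lt_or_eq_of_le hle with hlt | hbd
    · have hzero : D (zk - zj) + R u = 0 :=
        le_antisymm hN (variation_interior ι hsub hhom zj zk hE hminw hlt (zk - zj))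
      have hlam0 : lam = 0 := by rw [hlam, hzero]; simp
      refine ⟨fun w => ?_, by rw [hlam0]; ring⟩
      have := variation_interior ι hsub hhom zj zk hE hminw hlt w
      rw [hlam0]; simpa using this
    · refine ⟨fun w => ?_, by rw [← hbd]; ring⟩
      have hvb := variation_boundary ι hsub hhom hτ zj zk hE hminw hbd w
      have heq : lam * ⟪u, ι w⟫ =
          -((⟪u, ι w⟫ / τ ^ 2) * (D (zk - zj) + R u)) := by
        rw [hlam]; ring
      rw [heq]; linarith
  obtain ⟨hK, hcomp⟩ := hKcomp
  have h5 : lam * ‖u‖ ^ 2 = lam * τ ^ 2 := by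
    have h5' : lam * (‖u‖ - τ) * (‖u‖ + τ) = 0 := by rw [hcomp]; ring
    linear_combination h5'
  -- construct η
  set g : Z →L[ℝ] ℝ := D + lam • ((innerSL ℝ u).comp ι) with hg
  have hgapp : ∀ w : Z, g w = D w + lam * ⟪u, ι w⟫ := by
    intro w
    simp only [hg, ContinuousLinearMap.add_apply, ContinuousLinearMap.smul_apply,
      ContinuousLinearMap.comp_apply, innerSL_apply_apply, smul_eq_mul]
  set C := lam * τ + ρ₂ with hC
  have hCnn : ρ₂ ≤ C := by
    rw [hC]; nlinarith [mul_nonneg hlamnn hτ.le]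
  have hbound : ∀ w : Z, |g w| ≤ C * ‖ι w‖ := by
    intro w
    have h1 := hK w
    have h2 := hK (-w)
    have h3 : ι (-w) = -ι w := by simp
    rw [h3] at h2
    simp only [_root_.map_neg, inner_neg_right, mul_neg] at h2
    have h4 : R (ι w) ≤ ρ₂ * ‖ι w‖ := hub _
    have h4' : R (-ι w) ≤ ρ₂ * ‖ι w‖ := by
      have := hub (-ι w); rwa [norm_neg] at this
    have hρC : ρ₂ * ‖ι w‖ ≤ C * ‖ι w‖ :=
      mul_le_mul_of_nonneg_right hCnn (norm_nonneg _)
    rw [hgapp w, abs_le]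
    constructor <;> linarith
  obtain ⟨η₀, hη₀⟩ := exists_factorization ι hinj g C hbound
  set η : V →L[ℝ] ℝ := η₀ - lam • innerSL ℝ u with hη
  have hηι : η.comp ι = D := by
    ext w
    have h1 : η₀ (ι w) = g w := ContinuousLinearMap.ext_iff.mp hη₀ w
    simp only [ContinuousLinearMap.comp_apply, hη, ContinuousLinearMap.sub_apply,
      ContinuousLinearMap.smul_apply, innerSL_apply_apply, smul_eq_mul]
    rw [h1, hgapp w]
    ring
  have hηu : η u = D (zk - zj) :=
    ContinuousLinearMap.ext_iff.mp hηι (zk - zj)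
  have hRc : Continuous R := R_continuous hconv hhom hub
  have hKV : ∀ v : V, 0 ≤ η v + R v + lam * (innerSL ℝ u v) := by
    have hG : Continuous fun v : V => η v + R v + lam * (innerSL ℝ u v) :=
      (η.continuous.add hRc).add (continuous_const.mul (innerSL ℝ u).continuous)
    have hclosed : IsClosed {v : V | 0 ≤ η v + R v + lam * (innerSL ℝ u v)} :=
      isClosed_le continuous_const hG
    have hrange : Set.range (ι : Z → V) ⊆ {v : V | 0 ≤ η v + R v + lam * (innerSL ℝ u v)} := by
      rintro _ ⟨w, rfl⟩
      have h1 := hK w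
      have h2 : η (ι w) = D w := ContinuousLinearMap.ext_iff.mp hηι w
      simp only [Set.mem_setOf_eq, h2, innerSL_apply_apply]
      linarith
    intro v
    have hv : v ∈ closure (Set.range (ι : Z → V)) := by
      rw [hdense.closure_range]; trivial
    exact hclosed.closure_subset_iff.mpr hrange hv
  set ξ : V →L[ℝ] ℝ := -(lam • innerSL ℝ u + η) with hξ
  have hξv : ∀ v : V, ξ v = -(lam * (innerSL ℝ u v) + η v) := by
    intro v
    simp only [hξ, ContinuousLinearMap.neg_apply, ContinuousLinearMap.add_apply,
      ContinuousLinearMap.smul_apply, smul_eq_mul]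
  have hξ0 : ξ ∈ subdiff R 0 := by
    intro v
    rw [hR0, sub_zero, hξv]
    have := hKV v
    linarith
  have hξu : ξ u = R u := by
    rw [hξv, innerSL_apply_apply, real_inner_self_eq_norm_sq, hηu]
    linarith [h5.trans hlamτ2]
  have hξmem : ξ ∈ subdiff R u := by
    intro v
    have h1 : ξ (v - u) = ξ v - ξ u := ξ.map_sub v u
    rw [h1, hξu]
    have h2 := hξ0 v
    rw [hR0, sub_zero] at h2
    linarith
  clear_value ξ η C g lam u D zj zk t'
  -- infDist
  have hlamnorm : lam * ‖u‖ = lam * τ := by linear_combination hcomp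
  have hup : Metric.infDist (-η) (subdiff R 0) ≤ lam * τ := by
    have hd : dist (-η) ξ = lam * ‖u‖ := by
      rw [dist_eq_norm]
      have h6 : -η - ξ = lam • innerSL ℝ u := by rw [hξ]; module
      rw [h6]
      have h6' : ‖lam • innerSL ℝ u‖ = ‖lam‖ * ‖innerSL ℝ u‖ := norm_smul lam (innerSL ℝ u)
      rw [h6', Real.norm_eq_abs, abs_of_nonneg hlamnn, innerSL_apply_norm]
    calc Metric.infDist (-η) (subdiff R 0) ≤ dist (-η) ξ :=
          Metric.infDist_le_dist_of_mem hξ0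
      _ = lam * ‖u‖ := hd
      _ = lam * τ := hlamnorm
  have hlow : lam * τ ≤ Metric.infDist (-η) (subdiff R 0) := by
    by_contra hcon
    push_neg at hcon
    obtain ⟨ζ, hζmem, hζdist⟩ :=
      (Metric.infDist_lt_iff ⟨ξ, hξ0⟩).mp hcon
    have hζu : ζ u ≤ R u := by
      have := hζmem u
      rw [hR0, sub_zero, zero_add] at this
      exact this
    have h7 : lam * τ ^ 2 ≤ (-η - ζ) u := by
      have h7' : (-η - ζ) u = -(η u) - ζ u := by simp
      rw [h7', hηu]
      linarith [hlamτ2]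
    have h8 : (-η - ζ) u ≤ ‖-η - ζ‖ * ‖u‖ :=
      le_trans (le_abs_self _) ((-η - ζ).le_opNorm u)
    have h9 : ‖-η - ζ‖ * ‖u‖ ≤ ‖-η - ζ‖ * τ :=
      mul_le_mul_of_nonneg_left hle (norm_nonneg _)
    have h10 : dist (-η) ζ = ‖-η - ζ‖ := dist_eq_norm _ _
    nlinarith [h7, h8, h9, hζdist, h10, hτ]
  have hddeq : Metric.infDist (-η) (subdiff R 0) = lam * τ := le_antisymm hup hlow
  refine ⟨lam, η, hlamnn, hηι, hcomp, ?_, ?_, ?_, ⟨ξ, hξmem, by rw [hξ]; module⟩, ?_⟩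
  · rw [hddeq]
    linear_combination -h5
  · rw [hddeq]
    linear_combination hlamτ2
  · intro v
    have := hKV v
    linarith
  · rw [hddeq]
    field_simp


end RIS
end
end

section
/- The iterates of the local incremental minimization scheme are uniformly bounded in Z: sup over all step sizes τ > 0 and all indices k ∈ ℕ of ‖z_k^τ‖_Z is finite. -/
open MeasureTheory
open scoped RealInnerProductSpace NNReal

noncomputable section

namespace RIS

variable {Z V X : Type*}
  [NormedAddCommGroup Z] [InnerProductSpace ℝ Z] [CompleteSpace Z]
  [NormedAddCommGroup V] [InnerProductSpace ℝ V] [CompleteSpace V]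
  [NormedAddCommGroup X] [NormedSpace ℝ X]

private lemma aux_sq (s x b : ℝ) (hx : 0 ≤ x) (hb : 0 ≤ b) (hs : 0 < s)
    (h2 : s^2 * x^2 ≤ 4 * b^2) : s * x ≤ 2 * b := by
  nlinarith [mul_nonneg hs.le hx, sq_nonneg (s*x - 2*b), sq_nonneg (s*x + 2*b)]

private lemma aux_main (a b x s L Δ : ℝ) (ha : 0 ≤ a) (hb : 0 ≤ b) (hx : 0 ≤ x)
    (hs : 0 < s) (hL : 0 ≤ L) (hΔ : 0 ≤ Δ) (h1 : b^2 ≤ a^2 + L*Δ*x) (h2 : s*x ≤ 2*b) :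
    s*b ≤ s*a + 2*L*Δ := by
  by_contra h
  push_neg at h
  have hsb : 0 < s * b := by
    have : 0 ≤ s*a + 2*L*Δ := by positivity
    linarith
  have hba : a ≤ b := by nlinarith
  nlinarith [mul_le_mul_of_nonneg_left h2 (mul_nonneg (mul_nonneg hs.le hL) hΔ),
    mul_le_mul_of_nonneg_left h1 (mul_pos hs hs).le,
    mul_lt_mul_of_pos_right h hsb,
    mul_nonneg ha (sub_nonneg.mpr hba), mul_pos hs hs]

/-- Lemma 3.1, uniform a priori bound on the iterates:
the iterates of the local incremental minimization scheme are bounded in `Z`,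
uniformly in the step size `τ > 0` and the iteration index `k`. -/
theorem statement1
    (ι : Z →L[ℝ] V) (ιX : V →L[ℝ] X)
    (A : Z →L[ℝ] Z →L[ℝ] ℝ) (α : ℝ) (F : Z → ℝ) (DF : Z → V →L[ℝ] ℝ)
    (D2F : Z → Z →L[ℝ] V →L[ℝ] ℝ) (R : V → ℝ) (ℓ : ℝ → V →L[ℝ] ℝ) (L T : ℝ)
    (hstand : StandingAssumptions ι ιX A α F DF D2F R ℓ L T)
    (z₀ : Z) (hz₀ : LocStable R A DF ℓ ι 0 z₀)
    (t : ℝ → ℕ → ℝ) (z : ℝ → ℕ → Z)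
    (hscheme : ∀ τ : ℝ, 0 < τ → Scheme A F R ℓ ι T τ z₀ (t τ) (z τ)) :
    ∃ C : ℝ, ∀ τ : ℝ, 0 < τ → ∀ k : ℕ, ‖z τ k‖ ≤ C := by
  unfold StandingAssumptions at hstand
  obtain ⟨-, -, hι_norm, -, -, hα, hAcoer, hF0, -, -, -, hL0, hℓlip, hT, -, -, hR0, hRhom, -⟩ :=
    hstand
  obtain ⟨s, hs_def⟩ : ∃ s : ℝ, s = Real.sqrt α := ⟨_, rfl⟩
  have hs : 0 < s := hs_def ▸ Real.sqrt_pos.mpr hα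
  have hs2 : s ^ 2 = α := hs_def ▸ Real.sq_sqrt hα.le
  obtain ⟨M, hM_def⟩ : ∃ M : ℝ, M = ‖ℓ 0‖ + L * T := ⟨_, rfl⟩
  have hM0 : 0 ≤ M := hM_def ▸ add_nonneg (norm_nonneg _) (mul_nonneg hL0 hT.le)
  have hℓd : ∀ u ∈ Set.Icc (0:ℝ) T, ∀ u' ∈ Set.Icc (0:ℝ) T,
      ‖ℓ u - ℓ u'‖ ≤ L * |u - u'| := by
    intro u hu u' hu'
    have h := hℓlip.dist_le_mul u hu u' hu'
    rw [Real.coe_toNNReal L hL0] at h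
    rwa [dist_eq_norm, Real.dist_eq] at h
  have hMb : ∀ u ∈ Set.Icc (0:ℝ) T, ‖ℓ u‖ ≤ M := by
    intro u hu
    have h := hℓd u hu 0 ⟨le_refl 0, hT.le⟩
    have h2 : ‖ℓ u‖ - ‖ℓ 0‖ ≤ ‖ℓ u - ℓ 0‖ := norm_sub_norm_le _ _
    have h3 : |u - 0| ≤ T := by
      rw [sub_zero, abs_of_nonneg hu.1]; exact hu.2
    have : L * |u - 0| ≤ L * T := mul_le_mul_of_nonneg_left h3 hL0
    rw [hM_def]; linarith
  have hkey : ∀ x : ℝ, 0 ≤ α/4 * x^2 - M*x + M^2/α := by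
    intro x
    have h := sq_nonneg (s*x/2 - M/s)
    have hexp : (s*x/2 - M/s)^2 = s^2/4*x^2 - M*x + M^2/s^2 := by
      field_simp
      ring
    rw [hexp, hs2] at h
    linarith
  have hcoer : ∀ u ∈ Set.Icc (0:ℝ) T, ∀ w : Z,
      α/4 * ‖w‖^2 - M^2/α ≤ energy A F ℓ ι u w := by
    intro u hu w
    have h1 : α * ‖w‖ ^ 2 ≤ A w w := hAcoer w
    have h2 : 0 ≤ F w := hF0 w
    have h3 : ℓ u (ι w) ≤ M * ‖w‖ := by
      calc ℓ u (ι w) ≤ |ℓ u (ι w)| := le_abs_self _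
        _ = ‖ℓ u (ι w)‖ := (Real.norm_eq_abs _).symm
        _ ≤ ‖ℓ u‖ * ‖ι w‖ := (ℓ u).le_opNorm _
        _ ≤ M * ‖w‖ := mul_le_mul (hMb u hu) (hι_norm w) (norm_nonneg _) hM0
    have hk := hkey ‖w‖
    simp only [energy]
    linarith
  refine ⟨(2*s*Real.sqrt (energy A F ℓ ι 0 z₀ + M^2/α) + 4*L*T)/α, ?_⟩
  intro τ hτ k
  have hsch := hscheme τ hτ
  unfold Scheme at hsch
  obtain ⟨ht0, hz0, hstep⟩ := hsch
  have hΔτ : ∀ j, ‖ι (z τ (j+1) - z τ j)‖ ≤ τ := fun j => (hstep j).1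
  have htrec : ∀ j, t τ (j+1) = min (t τ j + τ - ‖ι (z τ (j+1) - z τ j)‖) T :=
    fun j => (hstep j).2.2
  have htmem : ∀ j, t τ j ∈ Set.Icc (0:ℝ) T := by
    intro j
    induction j with
    | zero => rw [ht0]; exact ⟨le_refl 0, hT.le⟩
    | succ n ih =>
      rw [htrec n]
      exact ⟨le_min (by linarith [ih.1, hΔτ n]) hT.le, min_le_right _ _⟩
  have htmono : ∀ j, t τ j ≤ t τ (j+1) := by
    intro j
    rw [htrec j]
    exact le_min (by linarith [hΔτ j]) (htmem j).2
  have hR00 : R 0 = 0 := by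
    have h := hRhom 0 0 le_rfl
    simpa using h
  have hEdec : ∀ j, energy A F ℓ ι (t τ j) (z τ (j+1)) ≤ energy A F ℓ ι (t τ j) (z τ j) := by
    intro j
    have hball : ‖ι (z τ j - z τ j)‖ ≤ τ := by
      simp [hτ.le]
    have h := (hstep j).2.1 (z τ j) hball
    have h0 : R (ι (z τ j - z τ j)) = 0 := by
      rw [sub_self, map_zero, hR00]
    have h1 : 0 ≤ R (ι (z τ (j+1) - z τ j)) := hR0 _
    rw [h0] at h
    linarith
  obtain ⟨g, hgdef⟩ : ∃ g : ℕ → ℝ, g = fun j => energy A F ℓ ι (t τ j) (z τ j) + M ^ 2 / α :=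
    ⟨_, rfl⟩
  have hgap : ∀ j, g j = energy A F ℓ ι (t τ j) (z τ j) + M ^ 2 / α := fun j => by
    rw [hgdef]
  have hglb : ∀ j, α/4 * ‖z τ j‖^2 ≤ g j := by
    intro j
    have := hcoer (t τ j) (htmem j) (z τ j)
    rw [hgap j]
    linarith
  have hgnn : ∀ j, 0 ≤ g j := by
    intro j
    have h := hglb j
    have h2 : (0:ℝ) ≤ α/4 * ‖z τ j‖^2 :=
      mul_nonneg (by linarith) (sq_nonneg _)
    linarith
  have hgstep : ∀ j, g (j+1) ≤ g j + L * (t τ (j+1) - t τ j) * ‖z τ (j+1)‖ := by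
    intro j
    have hΔ0 : 0 ≤ t τ (j+1) - t τ j := sub_nonneg.mpr (htmono j)
    have hdist : ‖ℓ (t τ j) - ℓ (t τ (j+1))‖ ≤ L * (t τ (j+1) - t τ j) := by
      have h := hℓd (t τ j) (htmem j) (t τ (j+1)) (htmem (j+1))
      rwa [abs_sub_comm, abs_of_nonneg hΔ0] at h
    have hpt : ℓ (t τ j) (ι (z τ (j+1))) - ℓ (t τ (j+1)) (ι (z τ (j+1)))
        ≤ L * (t τ (j+1) - t τ j) * ‖z τ (j+1)‖ := by
      have e1 : ℓ (t τ j) (ι (z τ (j+1))) - ℓ (t τ (j+1)) (ι (z τ (j+1)))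
          = (ℓ (t τ j) - ℓ (t τ (j+1))) (ι (z τ (j+1))) := by
        simp
      rw [e1]
      calc (ℓ (t τ j) - ℓ (t τ (j+1))) (ι (z τ (j+1)))
          ≤ ‖(ℓ (t τ j) - ℓ (t τ (j+1))) (ι (z τ (j+1)))‖ := le_abs_self _
        _ ≤ ‖ℓ (t τ j) - ℓ (t τ (j+1))‖ * ‖ι (z τ (j+1))‖ :=
            (ℓ (t τ j) - ℓ (t τ (j+1))).le_opNorm _
        _ ≤ (L * (t τ (j+1) - t τ j)) * ‖z τ (j+1)‖ :=
            mul_le_mul hdist (hι_norm _) (norm_nonneg _) (mul_nonneg hL0 hΔ0)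
    have hE := hEdec j
    rw [hgap (j+1), hgap j]
    simp only [energy] at hE ⊢
    linarith
  have hgs : ∀ j, s * Real.sqrt (g (j+1)) ≤ s * Real.sqrt (g j)
      + 2*L*(t τ (j+1) - t τ j) := by
    intro j
    have hΔ0 : 0 ≤ t τ (j+1) - t τ j := sub_nonneg.mpr (htmono j)
    have hb2 : Real.sqrt (g (j+1)) ^ 2 = g (j+1) := Real.sq_sqrt (hgnn (j+1))
    have ha2 : Real.sqrt (g j) ^ 2 = g j := Real.sq_sqrt (hgnn j)
    have h2 : s * ‖z τ (j+1)‖ ≤ 2 * Real.sqrt (g (j+1)) := by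
      apply aux_sq _ _ _ (norm_nonneg _) (Real.sqrt_nonneg _) hs
      rw [hs2, hb2]
      have := hglb (j+1)
      linarith
    have h1 : Real.sqrt (g (j+1)) ^ 2 ≤ Real.sqrt (g j) ^ 2
        + L * (t τ (j+1) - t τ j) * ‖z τ (j+1)‖ := by
      rw [hb2, ha2]
      exact hgstep j
    exact aux_main _ _ _ _ _ _ (Real.sqrt_nonneg _) (Real.sqrt_nonneg _)
      (norm_nonneg _) hs hL0 hΔ0 h1 h2
  have hind : ∀ j, s * Real.sqrt (g j) ≤ s * Real.sqrt (g 0) + 2*L*(t τ j) := by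
    intro j
    induction j with
    | zero => rw [ht0]; simp
    | succ n ih =>
      have := hgs n
      linarith
  have hg0 : g 0 = energy A F ℓ ι 0 z₀ + M^2/α := by
    rw [hgap 0, ht0, hz0]
  have hsx : s * ‖z τ k‖ ≤ 2 * Real.sqrt (g k) := by
    apply aux_sq _ _ _ (norm_nonneg _) (Real.sqrt_nonneg _) hs
    rw [hs2, Real.sq_sqrt (hgnn k)]
    have := hglb k
    linarith
  have htk : t τ k ≤ T := (htmem k).2
  have hfin : α * ‖z τ k‖ ≤ 2*s*Real.sqrt (energy A F ℓ ι 0 z₀ + M^2/α) + 4*L*T := by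
    have hmul := mul_le_mul_of_nonneg_left hsx hs.le
    have heq : s * (s * ‖z τ k‖) = α * ‖z τ k‖ := by
      rw [← hs2]; ring
    have h2 : s * (2 * Real.sqrt (g k)) = 2 * (s * Real.sqrt (g k)) := by ring
    rw [heq, h2] at hmul
    have h3 := hind k
    have h4 : 2*L*(t τ k) ≤ 2*L*T := by
      have := mul_le_mul_of_nonneg_left htk (by linarith : (0:ℝ) ≤ 2*L)
      linarith
    rw [hg0] at h3
    linarith
  rw [le_div_iff₀ hα]
  linarith


end RIS
end
end

section
/- Under κ-uniform convexity of the energy, for every k ∈ ℕ with k ≤ N(τ) the iterates and multipliers of the local incremental minimization scheme satisfy 0 ≥ κ‖z_{k+1} − z_k‖_Z² − |ℓ|_Lip (t_k − t_{k−1}) ‖z_{k+1} − z_k‖_V + (λ_{k+1} − λ_k) τ². -/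
set_option maxHeartbeats 1000000


open MeasureTheory
open scoped RealInnerProductSpace NNReal

noncomputable section

namespace RIS

variable {Z V X : Type*}
  [NormedAddCommGroup Z] [InnerProductSpace ℝ Z] [CompleteSpace Z]
  [NormedAddCommGroup V] [InnerProductSpace ℝ V] [CompleteSpace V]
  [NormedAddCommGroup X] [NormedSpace ℝ X]

/-- Lemma 3.6: under `κ`-uniform convexity of the energy,
for all `1 ≤ k ≤ N(τ)` the iterates and the Lagrange multipliers satisfy
`0 ≥ κ‖z_{k+1} − z_k‖²_Z − |ℓ|_Lip (t_k − t_{k−1})‖z_{k+1} − z_k‖_V + (λ_{k+1} − λ_k)τ²`. -/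
theorem statement4
    (ι : Z →L[ℝ] V) (ιX : V →L[ℝ] X)
    (A : Z →L[ℝ] Z →L[ℝ] ℝ) (α : ℝ) (F : Z → ℝ) (DF : Z → V →L[ℝ] ℝ)
    (D2F : Z → Z →L[ℝ] V →L[ℝ] ℝ) (R : V → ℝ) (ℓ : ℝ → V →L[ℝ] ℝ) (L T : ℝ)
    (hstand : StandingAssumptions ι ιX A α F DF D2F R ℓ L T)
    (κ : ℝ) (hconv : UniformlyConvex A D2F ι κ)
    (τ : ℝ) (hτ : 0 < τ) (z₀ : Z) (hz₀ : LocStable R A DF ℓ ι 0 z₀)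
    (t : ℕ → ℝ) (z : ℕ → Z) (hscheme : Scheme A F R ℓ ι T τ z₀ t z)
    (N : ℕ) (hN : t N = T) (hNfirst : ∀ j : ℕ, j < N → t j < T)
    (lam : ℕ → ℝ) (η : ℕ → V →L[ℝ] ℝ)
    (hlam : ∀ k : ℕ,
      0 ≤ lam (k + 1) ∧
      (η (k + 1)).comp ι = DI A DF ℓ ι (t k) (z (k + 1)) ∧
      lam (k + 1) * (‖ι (z (k + 1) - z k)‖ - τ) = 0 ∧
      τ * Metric.infDist (-(η (k + 1))) (subdiff R 0) =
        lam (k + 1) * ‖ι (z (k + 1) - z k)‖ ^ 2 ∧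
      R (ι (z (k + 1) - z k)) + τ * Metric.infDist (-(η (k + 1))) (subdiff R 0) =
        -(DI A DF ℓ ι (t k) (z (k + 1))) (z (k + 1) - z k) ∧
      ∀ v : V, -(lam (k + 1) * (innerSL ℝ (ι (z (k + 1) - z k)) v) + η (k + 1) v) ≤ R v)
    (k : ℕ) (hk1 : 1 ≤ k) (hkN : k ≤ N) :
    0 ≥ κ * ‖z (k + 1) - z k‖ ^ 2 - L * (t k - t (k - 1)) * ‖ι (z (k + 1) - z k)‖
        + (lam (k + 1) - lam k) * τ ^ 2 := by
  obtain ⟨m, rfl⟩ : ∃ m, k = m + 1 := ⟨k - 1, (Nat.succ_pred_eq_of_pos hk1).symm⟩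
  obtain ⟨-, -, -, -, hAsymm, hα, hAcoer, hF0, hDFd, hD2F, -, hL0, hLip, hT, -⟩ := hstand
  obtain ⟨hκ, hκconv⟩ := hconv
  obtain ⟨ht0, hz0, hstep⟩ := hscheme
  -- monotonicity and bounds for t
  have htT : ∀ j, t j ≤ T := by
    intro j; induction j with
    | zero => rw [ht0]; exact le_of_lt hT
    | succ n ih => rw [(hstep n).2.2]; exact min_le_right _ _
  have htmono : ∀ j, t j ≤ t (j + 1) := by
    intro j
    rw [(hstep j).2.2]
    refine le_min ?_ (htT j)
    have := (hstep j).1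
    linarith
  have ht0le : ∀ j, 0 ≤ t j := by
    intro j; induction j with
    | zero => rw [ht0]
    | succ n ih => exact ih.trans (htmono n)
  -- abbreviations
  have hιu : ‖ι (z (m + 1 + 1) - z (m + 1))‖ ≤ τ := (hstep (m + 1)).1
  have hιw : ‖ι (z (m + 1) - z m)‖ ≤ τ := (hstep m).1
  -- uniform convexity along the segment from z (m+1) to z (m+2)
  have hkey : κ * ‖z (m + 1 + 1) - z (m + 1)‖ ^ 2 ≤
      A (z (m + 1 + 1) - z (m + 1)) (z (m + 1 + 1) - z (m + 1)) +
        (DF (z (m + 1 + 1)) (ι (z (m + 1 + 1) - z (m + 1))) -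
          DF (z (m + 1)) (ι (z (m + 1 + 1) - z (m + 1)))) := by
    set a : Z := z (m + 1) with ha
    set u : Z := z (m + 1 + 1) - z (m + 1) with hupf
    set c : ℝ := κ * ‖u‖ ^ 2 - A u u with hc
    have hder : ∀ s : ℝ, HasDerivAt (fun s : ℝ => DF (a + s • u) (ι u) - c * s)
        (D2F (a + s • u) u (ι u) - c) s := by
      intro s
      have h1 : HasDerivAt (fun s : ℝ => a + s • u) u s := by
        simpa using ((hasDerivAt_id s).smul_const u).const_add a
      have h2 : HasDerivAt (fun s : ℝ => DF (a + s • u)) (D2F (a + s • u) u) s :=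
        (hD2F (a + s • u)).comp_hasDerivAt s h1
      have h3 : HasDerivAt (fun s : ℝ => DF (a + s • u) (ι u))
          (D2F (a + s • u) u (ι u)) s := by
        simpa using h2.clm_apply (hasDerivAt_const s (ι u))
      have h4 := h3.sub ((hasDerivAt_id' s).const_mul c)
      rw [mul_one] at h4
      exact h4
    have hmono : Monotone (fun s : ℝ => DF (a + s • u) (ι u) - c * s) := by
      apply monotone_of_deriv_nonneg
      · exact fun s => (hder s).differentiableAt
      · intro s
        rw [(hder s).deriv]
        have := hκconv (a + s • u) u
        linarith
    have h01 := hmono (show (0:ℝ) ≤ 1 by norm_num)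
    simp only [zero_smul, one_smul, add_zero, mul_zero, mul_one, sub_zero] at h01
    have hab : a + u = z (m + 1 + 1) := by rw [ha, hupf]; abel
    rw [hab] at h01
    rw [hc] at h01
    linarith
  -- Lipschitz bound for the load
  have hℓ : (ℓ (t (m + 1)) - ℓ (t m)) (ι (z (m + 1 + 1) - z (m + 1))) ≤
      L * (t (m + 1) - t m) * ‖ι (z (m + 1 + 1) - z (m + 1))‖ := by
    have h1 : ‖ℓ (t (m + 1)) - ℓ (t m)‖ ≤ L * (t (m + 1) - t m) := by
      have h2 := hLip.dist_le_mul (t (m + 1)) ⟨ht0le _, htT _⟩ (t m) ⟨ht0le _, htT _⟩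
      rw [dist_eq_norm, Real.dist_eq, abs_of_nonneg (by linarith [htmono m]),
        Real.coe_toNNReal L hL0] at h2
      exact h2
    calc (ℓ (t (m + 1)) - ℓ (t m)) (ι (z (m + 1 + 1) - z (m + 1)))
        ≤ ‖ℓ (t (m + 1)) - ℓ (t m)‖ * ‖ι (z (m + 1 + 1) - z (m + 1))‖ := by
          refine le_trans (le_abs_self _) ?_
          rw [← Real.norm_eq_abs]
          exact (ℓ (t (m + 1)) - ℓ (t m)).le_opNorm _
      _ ≤ L * (t (m + 1) - t m) * ‖ι (z (m + 1 + 1) - z (m + 1))‖ :=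
          mul_le_mul_of_nonneg_right h1 (norm_nonneg _)
  -- multiplier identities
  obtain ⟨hlam2nn, hη2, hcomp2, hdist2, hiden2, -⟩ := hlam (m + 1)
  obtain ⟨hlam1nn, hη1, -, -, -, hineq1⟩ := hlam m
  -- λ_{k+1} ‖ι u‖² = λ_{k+1} τ²
  have hlamsq : lam (m + 1 + 1) * ‖ι (z (m + 1 + 1) - z (m + 1))‖ ^ 2 =
      lam (m + 1 + 1) * τ ^ 2 := by
    rcases mul_eq_zero.mp hcomp2 with h | h
    · rw [h]; ring
    · have : ‖ι (z (m + 1 + 1) - z (m + 1))‖ = τ := by linarith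
      rw [this]
  -- evaluate the variational inequality of step k at v = ι u
  have hη1u : η (m + 1) (ι (z (m + 1 + 1) - z (m + 1))) =
      (DI A DF ℓ ι (t m) (z (m + 1))) (z (m + 1 + 1) - z (m + 1)) := by
    have := DFunLike.congr_fun hη1 (z (m + 1 + 1) - z (m + 1))
    simpa using this
  have hineq := hineq1 (ι (z (m + 1 + 1) - z (m + 1)))
  rw [hη1u] at hineq
  -- rewrite the identity of step k+1
  rw [hdist2] at hiden2
  -- Cauchy–Schwarz estimate for λ_k term
  have hcs : lam (m + 1) * ⟪ι (z (m + 1) - z m), ι (z (m + 1 + 1) - z (m + 1))⟫ ≤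
      lam (m + 1) * τ ^ 2 := by
    have h1 := real_inner_le_norm (ι (z (m + 1) - z m)) (ι (z (m + 1 + 1) - z (m + 1)))
    have h2 : ‖ι (z (m + 1) - z m)‖ * ‖ι (z (m + 1 + 1) - z (m + 1))‖ ≤ τ ^ 2 := by
      nlinarith [norm_nonneg (ι (z (m + 1) - z m)), norm_nonneg (ι (z (m + 1 + 1) - z (m + 1)))]
    nlinarith [hlam1nn]
  -- expand DI in the relevant expressions
  simp only [DI, ContinuousLinearMap.add_apply, ContinuousLinearMap.sub_apply,
    ContinuousLinearMap.coe_comp', Function.comp_apply, ContinuousLinearMap.neg_apply,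
    innerSL_apply_apply] at hineq hiden2 hℓ ⊢
  have hAdiff : A (z (m + 1 + 1)) (z (m + 1 + 1) - z (m + 1)) -
      A (z (m + 1)) (z (m + 1 + 1) - z (m + 1)) =
      A (z (m + 1 + 1) - z (m + 1)) (z (m + 1 + 1) - z (m + 1)) := by
    rw [map_sub]; simp
  simp only [Nat.add_sub_cancel]
  linarith [hkey, hℓ, hineq, hiden2, hlamsq, hcs, hAdiff]

end RIS
end
end

section
/- Under κ-uniform convexity of the energy, for any k ∈ ℕ with k ≤ N(τ): if the iterate z_k is locally stable at time t_{k−1}, i.e. 0 ∈ ∂R(0) + D_zI(t_{k−1},z_k), then ‖z_{k+1} − z_k‖_Z ≤ (|ℓ|_Lip/κ)(t_k − t_{k−1}). -/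
open MeasureTheory
open scoped RealInnerProductSpace NNReal

noncomputable section

namespace RIS

variable {Z V X : Type*}
  [NormedAddCommGroup Z] [InnerProductSpace ℝ Z] [CompleteSpace Z]
  [NormedAddCommGroup V] [InnerProductSpace ℝ V] [CompleteSpace V]
  [NormedAddCommGroup X] [NormedSpace ℝ X]

/-- Strong convexity of the energy along segments. -/
lemma strong_convex
    (ι : Z →L[ℝ] V) (A : Z →L[ℝ] Z →L[ℝ] ℝ) (F : Z → ℝ) (DF : Z → V →L[ℝ] ℝ)
    (D2F : Z → Z →L[ℝ] V →L[ℝ] ℝ) (ℓ : ℝ → V →L[ℝ] ℝ)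
    (hsym : ∀ z w : Z, A z w = A w z)
    (hDF : ∀ w : Z, HasFDerivAt F ((DF w).comp ι) w)
    (hD2F : ∀ w : Z, HasFDerivAt DF (D2F w) w)
    (κ : ℝ) (hκ : ∀ w v : Z, κ * ‖v‖ ^ 2 ≤ A v v + D2F w v (ι v))
    (t : ℝ) (a b : Z) :
    energy A F ℓ ι t a + DI A DF ℓ ι t a (b - a) + κ / 2 * ‖b - a‖ ^ 2 ≤
      energy A F ℓ ι t b := by
  set v := b - a with hv
  set g : ℝ → Z := fun s => a + s • v with hgdef
  have hg : ∀ s : ℝ, HasDerivAt g v s := by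
    intro s
    have h1 : HasDerivAt (fun s : ℝ => s • v) ((1 : ℝ) • v) s :=
      (hasDerivAt_id s).smul_const v
    simpa [hgdef, one_smul] using h1.const_add a
  set φ : ℝ → ℝ := fun s => energy A F ℓ ι t (g s) with hφdef
  set ψ : ℝ → ℝ := fun s => A (g s) v + DF (g s) (ι v) - ℓ t (ι v) with hψdef
  set χ : ℝ → ℝ := fun s => A v v + D2F (g s) v (ι v) with hχdef
  have hAg : ∀ s : ℝ, HasDerivAt (fun s => A (g s)) (A v) s := fun s =>
    A.hasFDerivAt.comp_hasDerivAt s (hg s)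
  have hφ' : ∀ s : ℝ, HasDerivAt φ (ψ s) s := by
    intro s
    have h1 : HasDerivAt (fun s => A (g s) (g s)) (A v (g s) + A (g s) v) s :=
      (hAg s).clm_apply (hg s)
    have h2 : HasDerivAt (fun s => F (g s)) (((DF (g s)).comp ι) v) s :=
      (hDF (g s)).comp_hasDerivAt s (hg s)
    have h3 : HasDerivAt (fun s => ℓ t (ι (g s))) (((ℓ t).comp ι) v) s :=
      ((ℓ t).comp ι).hasFDerivAt.comp_hasDerivAt s (hg s)
    have h4 := ((h1.const_mul (1 / 2 : ℝ)).add h2).sub h3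
    have heq : (1 / 2 : ℝ) * (A v (g s) + A (g s) v) + ((DF (g s)).comp ι) v
        - ((ℓ t).comp ι) v = ψ s := by
      simp only [hψdef, ContinuousLinearMap.comp_apply]
      rw [hsym v (g s)]; ring
    rw [heq] at h4
    exact h4
  have hψ' : ∀ s : ℝ, HasDerivAt ψ (χ s) s := by
    intro s
    have h1 : HasDerivAt (fun s => A (g s) v) (A v v + A (g s) 0) s :=
      (hAg s).clm_apply (hasDerivAt_const s v)
    have h2c : HasDerivAt (fun s => DF (g s)) (D2F (g s) v) s :=
      (hD2F (g s)).comp_hasDerivAt s (hg s)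
    have h2 : HasDerivAt (fun s => DF (g s) (ι v)) (D2F (g s) v (ι v) + DF (g s) 0) s :=
      h2c.clm_apply (hasDerivAt_const s (ι v))
    have h4 := (h1.add h2).sub_const (ℓ t (ι v))
    simp only [map_zero, add_zero] at h4
    exact h4
  set μ : ℝ := κ * ‖v‖ ^ 2 with hμ
  have hmono1 : Monotone (fun s : ℝ => ψ s - s * μ) := by
    have hd : ∀ s : ℝ, HasDerivAt (fun s : ℝ => ψ s - s * μ) (χ s - μ) s := fun s =>
      (hψ' s).sub (hasDerivAt_mul_const μ)
    refine monotone_of_deriv_nonneg (fun s => (hd s).differentiableAt) (fun s => ?_)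
    rw [(hd s).deriv]
    have h5 := hκ (g s) v
    simp only [hχdef, hμ]
    linarith
  have hd2 : ∀ s : ℝ, HasDerivAt (fun s : ℝ => φ s - s * ψ 0 - μ * s ^ 2 / 2)
      (ψ s - ψ 0 - μ * s) s := by
    intro s
    have h1 := (hφ' s).sub (hasDerivAt_mul_const (ψ 0))
    have h2 : HasDerivAt (fun s : ℝ => μ * s ^ 2 / 2) (μ * s) s := by
      have h3 := (HasDerivAt.const_mul μ (hasDerivAt_pow 2 s)).div_const 2
      exact h3.congr_deriv (by norm_num; ring)
    exact h1.sub h2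
  have hmono2 : MonotoneOn (fun s : ℝ => φ s - s * ψ 0 - μ * s ^ 2 / 2) (Set.Icc 0 1) := by
    refine monotoneOn_of_deriv_nonneg (convex_Icc 0 1)
      (fun s _ => (hd2 s).differentiableAt.continuousAt.continuousWithinAt)
      (fun s _ => (hd2 s).differentiableAt.differentiableWithinAt) (fun s hs => ?_)
    rw [interior_Icc] at hs
    rw [(hd2 s).deriv]
    have h6 := hmono1 (le_of_lt hs.1 : (0 : ℝ) ≤ s)
    simp only [zero_mul, sub_zero] at h6
    linarith
  have h01 := hmono2 (Set.left_mem_Icc.mpr zero_le_one) (Set.right_mem_Icc.mpr zero_le_one)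
    zero_le_one
  simp only [zero_mul, sub_zero, one_mul, one_pow, ne_eq, OfNat.ofNat_ne_zero,
    not_false_eq_true, zero_pow, mul_zero, zero_div] at h01
  have hφ0 : φ 0 = energy A F ℓ ι t a := by simp [hφdef, hgdef]
  have hφ1 : φ 1 = energy A F ℓ ι t b := by simp [hφdef, hgdef, hv]
  have hψ0 : ψ 0 = DI A DF ℓ ι t a v := by
    simp [hψdef, hgdef, DI, ContinuousLinearMap.sub_apply, ContinuousLinearMap.add_apply,
      ContinuousLinearMap.comp_apply]
  rw [hφ0, hφ1, hψ0] at h01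
  linarith

set_option maxHeartbeats 1600000

/-- Lemma 3.7: under `κ`-uniform convexity, if the iterate `z_k`
is locally stable at time `t_{k−1}`, i.e. `0 ∈ ∂R(0) + D_zI(t_{k−1},z_k)`, then
`‖z_{k+1} − z_k‖_Z ≤ (|ℓ|_Lip/κ)(t_k − t_{k−1})`. -/
theorem statement5
    (ι : Z →L[ℝ] V) (ιX : V →L[ℝ] X)
    (A : Z →L[ℝ] Z →L[ℝ] ℝ) (α : ℝ) (F : Z → ℝ) (DF : Z → V →L[ℝ] ℝ)
    (D2F : Z → Z →L[ℝ] V →L[ℝ] ℝ) (R : V → ℝ) (ℓ : ℝ → V →L[ℝ] ℝ) (L T : ℝ)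
    (hstand : StandingAssumptions ι ιX A α F DF D2F R ℓ L T)
    (κ : ℝ) (hconv : UniformlyConvex A D2F ι κ)
    (τ : ℝ) (hτ : 0 < τ) (z₀ : Z) (hz₀ : LocStable R A DF ℓ ι 0 z₀)
    (t : ℕ → ℝ) (z : ℕ → Z) (hscheme : Scheme A F R ℓ ι T τ z₀ t z)
    (N : ℕ) (hN : t N = T) (hNfirst : ∀ j : ℕ, j < N → t j < T)
    (k : ℕ) (hk1 : 1 ≤ k) (hkN : k ≤ N)
    (hstable : LocStable R A DF ℓ ι (t (k - 1)) (z k)) :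
    ‖z (k + 1) - z k‖ ≤ (L / κ) * (t k - t (k - 1)) := by
  obtain ⟨hιinj, hιdense, hιnorm, hXinj, hsym, hα, hcoer, hF0, hDF, hD2F, hCF, hL0, hlip,
    hT, hRconv, hRlsc, hRnn, hRhom, hRnorm⟩ := hstand
  obtain ⟨hκ, hconv2⟩ := hconv
  obtain ⟨ht0, hz0, hstep⟩ := hscheme
  have hbase : ∀ i : ℕ, 0 ≤ t i ∧ t i ≤ T := by
    intro i
    induction i with
    | zero => exact ⟨le_of_eq ht0.symm, by rw [ht0]; exact le_of_lt hT⟩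
    | succ n ih =>
      have h := (hstep n).2.2
      have hb := (hstep n).1
      constructor
      · rw [h]
        exact le_min (by linarith [ih.1]) (le_of_lt hT)
      · rw [h]; exact min_le_right _ _
  have htm : ∀ j : ℕ, t j ≤ t (j + 1) := by
    intro j
    rw [(hstep j).2.2]
    exact le_min (by linarith [(hstep j).1]) (hbase j).2
  obtain ⟨m, rfl⟩ : ∃ m, k = m + 1 := ⟨k - 1, by omega⟩
  simp only [Nat.add_sub_cancel] at hstable ⊢
  set t' := t m with ht'
  set tk := t (m + 1) with htk
  set zk := z (m + 1) with hzk
  set zk1 := z (m + 1 + 1) with hzk1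
  set δ := zk1 - zk with hδ
  have htt : t' ≤ tk := htm m
  have hSC := strong_convex ι A F DF D2F ℓ hsym hDF hD2F κ hconv2
  -- stability
  obtain ⟨ξ, hξmem, hξeq⟩ := hstable
  have hR0 : R 0 = 0 := by simpa using hRhom 0 0 le_rfl
  have hξle : ∀ w : V, ξ w ≤ R w := by
    intro w
    have h := hξmem w
    simpa [hR0] using h
  have hstab : -(R (ι δ)) ≤ (DI A DF ℓ ι t' zk) δ := by
    have h0 : (ξ.comp ι + DI A DF ℓ ι t' zk) δ = 0 := by rw [hξeq]; rfl
    rw [ContinuousLinearMap.add_apply, ContinuousLinearMap.comp_apply] at h0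
    have := hξle (ι δ)
    linarith
  have key1 : energy A F ℓ ι t' zk - R (ι δ) + κ / 2 * ‖δ‖ ^ 2 ≤ energy A F ℓ ι t' zk1 := by
    have h := hSC t' zk zk1
    rw [← hδ] at h
    linarith
  have hball : ‖ι δ‖ ≤ τ := (hstep (m + 1)).1
  set Δ : ℝ := ℓ tk (ι δ) - ℓ t' (ι δ) with hΔ
  have hper : ∀ s : ℝ, s ∈ Set.Ioo (0 : ℝ) 1 → κ * ‖δ‖ ^ 2 / 2 * (1 + s) ≤ Δ := by
    intro s hs
    obtain ⟨hs0, hs1⟩ := hs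
    set w : Z := zk + s • δ with hw
    have hd1 : zk1 - w = (1 - s) • δ := by
      rw [hw, hδ]; module
    have hd2 : zk - w = (-s) • δ := by
      rw [hw, hδ]; module
    have hd3 : w - zk = s • δ := by rw [hw]; abel
    -- strong convexity at w
    have h3a := hSC t' w zk1
    have h3b := hSC t' w zk
    rw [hd1] at h3a
    rw [hd2] at h3b
    rw [ContinuousLinearMap.map_smul, norm_smul] at h3a h3b
    simp only [Real.norm_eq_abs] at h3a h3b
    rw [abs_of_nonneg (by linarith : (0:ℝ) ≤ 1 - s)] at h3a
    rw [abs_neg, abs_of_nonneg hs0.le] at h3b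
    simp only [smul_eq_mul] at h3a h3b
    -- convex combination (★★)
    have hcc : energy A F ℓ ι t' w + κ * ‖δ‖ ^ 2 / 2 * (s * (1 - s)) ≤
        s * energy A F ℓ ι t' zk1 + (1 - s) * energy A F ℓ ι t' zk := by
      have ha := mul_le_mul_of_nonneg_left h3a (le_of_lt hs0)
      have hb := mul_le_mul_of_nonneg_left h3b (by linarith : (0:ℝ) ≤ 1 - s)
      nlinarith [ha, hb]
    -- minimality (★★★)
    have hballw : ‖ι (w - zk)‖ ≤ τ := by
      rw [hd3, ContinuousLinearMap.map_smul, norm_smul, Real.norm_eq_abs,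
        abs_of_nonneg (le_of_lt hs0)]
      calc s * ‖ι δ‖ ≤ 1 * τ := by
            apply mul_le_mul (le_of_lt hs1) hball (norm_nonneg _) zero_le_one
        _ = τ := one_mul τ
    have hmin := (hstep (m + 1)).2.1 w hballw
    rw [← hδ, ← htk, ← hzk1, ← hzk] at hmin
    have hRw : R (ι (w - zk)) = s * R (ι δ) := by
      rw [hd3, ContinuousLinearMap.map_smul, hRhom s (ι δ) (le_of_lt hs0)]
    rw [hRw] at hmin
    -- convert times in hmin
    have hle1 : ℓ tk (ι zk1) - ℓ tk (ι w) = (1 - s) * ℓ tk (ι δ) := by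
      have h := congrArg (fun u => ℓ tk (ι u)) hd1
      simpa only [map_sub, _root_.map_smul, smul_eq_mul] using h
    have hle2 : ℓ t' (ι zk1) - ℓ t' (ι w) = (1 - s) * ℓ t' (ι δ) := by
      have h := congrArg (fun u => ℓ t' (ι u)) hd1
      simpa only [map_sub, _root_.map_smul, smul_eq_mul] using h
    have hEk1 : energy A F ℓ ι tk zk1 =
        energy A F ℓ ι t' zk1 - (ℓ tk (ι zk1) - ℓ t' (ι zk1)) := by
      simp only [energy]; ring
    have hEw : energy A F ℓ ι tk w =
        energy A F ℓ ι t' w - (ℓ tk (ι w) - ℓ t' (ι w)) := by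
      simp only [energy]; ring
    have hmin' : energy A F ℓ ι t' zk1 + (1 - s) * R (ι δ) ≤
        energy A F ℓ ι t' w + (1 - s) * Δ := by
      rw [hEk1, hEw] at hmin
      rw [hΔ]
      linarith [hle1, hle2, hmin]
    -- combine and divide by (1 - s)
    have hfin : (1 - s) * (κ * ‖δ‖ ^ 2 / 2 * (1 + s)) ≤ (1 - s) * Δ := by
      nlinarith [key1, hcc, hmin']
    exact le_of_mul_le_mul_left hfin (by linarith)
  -- pass to the limit s → 1
  have hμΔ : κ * ‖δ‖ ^ 2 ≤ Δ := by
    rcases eq_or_ne ‖δ‖ 0 with h0 | h0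
    · have h := hper (1 / 2) ⟨by norm_num, by norm_num⟩
      rw [h0] at h ⊢
      norm_num at h ⊢
      linarith
    · have hd : 0 < ‖δ‖ := lt_of_le_of_ne (norm_nonneg _) (Ne.symm h0)
      have hpos : 0 < κ * ‖δ‖ ^ 2 / 2 := by positivity
      refine le_of_forall_pos_le_add ?_
      intro ε hε
      set s : ℝ := max (1 - ε / (κ * ‖δ‖ ^ 2 / 2)) (1 / 2) with hsdef
      have hεμ : 0 < ε / (κ * ‖δ‖ ^ 2 / 2) := div_pos hε hpos
      have hsI : s ∈ Set.Ioo (0 : ℝ) 1 := by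
        constructor
        · exact lt_of_lt_of_le (by norm_num) (le_max_right _ _)
        · exact max_lt (by linarith) (by norm_num)
      have h := hper s hsI
      have h1 : 1 - s ≤ ε / (κ * ‖δ‖ ^ 2 / 2) := by
        have := le_max_left (1 - ε / (κ * ‖δ‖ ^ 2 / 2)) (1 / 2)
        linarith [this.trans_eq hsdef.symm]
      have h2 : κ * ‖δ‖ ^ 2 / 2 * (1 - s) ≤ ε := by
        calc κ * ‖δ‖ ^ 2 / 2 * (1 - s) ≤ κ * ‖δ‖ ^ 2 / 2 * (ε / (κ * ‖δ‖ ^ 2 / 2)) :=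
              mul_le_mul_of_nonneg_left h1 (le_of_lt hpos)
          _ = ε := by field_simp
      nlinarith [h, h2]
  -- Lipschitz bound
  have hnorml : ‖ℓ tk - ℓ t'‖ ≤ L * (tk - t') := by
    have hmem1 : tk ∈ Set.Icc 0 T := Set.mem_Icc.mpr ⟨(hbase (m + 1)).1, (hbase (m + 1)).2⟩
    have hmem2 : t' ∈ Set.Icc 0 T := Set.mem_Icc.mpr ⟨(hbase m).1, (hbase m).2⟩
    have h := hlip.dist_le_mul tk hmem1 t' hmem2
    rw [dist_eq_norm, Real.dist_eq, abs_of_nonneg (by linarith : (0:ℝ) ≤ tk - t')] at h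
    calc ‖ℓ tk - ℓ t'‖ ≤ (Real.toNNReal L : ℝ) * (tk - t') := h
      _ = L * (tk - t') := by rw [Real.coe_toNNReal L hL0]
  have hΔle : Δ ≤ L * (tk - t') * ‖δ‖ := by
    have h1 : Δ = (ℓ tk - ℓ t') (ι δ) := by
      rw [hΔ, ContinuousLinearMap.sub_apply]
    have h2 : (ℓ tk - ℓ t') (ι δ) ≤ ‖ℓ tk - ℓ t'‖ * ‖ι δ‖ :=
      le_trans (le_abs_self _) ((ℓ tk - ℓ t').le_opNorm (ι δ))
    have h3 : ‖ℓ tk - ℓ t'‖ * ‖ι δ‖ ≤ L * (tk - t') * ‖δ‖ := by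
      apply mul_le_mul hnorml (hιnorm δ) (norm_nonneg _)
      have : 0 ≤ tk - t' := by linarith
      positivity
    linarith [h1 ▸ h2, h3]
  -- conclude
  rcases eq_or_ne ‖δ‖ 0 with h0 | h0
  · rw [h0]
    have htt' : 0 ≤ tk - t' := by linarith
    positivity
  · have hd : 0 < ‖δ‖ := lt_of_le_of_ne (norm_nonneg _) (Ne.symm h0)
    have hkey : κ * ‖δ‖ ≤ L * (tk - t') := by nlinarith [hμΔ, hΔle, hd]
    rw [div_mul_eq_mul_div, le_div_iff₀ hκ]
    linarith

end RIS
end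
end

section
/- Under κ-uniform convexity of the energy there exists a constant C = C(|ℓ|_Lip, κ) > 0 (one may take C = √(2|ℓ|_Lip/κ)) such that ‖z_k − z_{k−1}‖_Z ≤ C τ for all iterations k ≤ N̂(τ) of the local incremental minimization scheme. -/
open MeasureTheory
open scoped RealInnerProductSpace NNReal

noncomputable section

namespace RIS

variable {Z V X : Type*}
  [NormedAddCommGroup Z] [InnerProductSpace ℝ Z] [CompleteSpace Z]
  [NormedAddCommGroup V] [InnerProductSpace ℝ V] [CompleteSpace V]
  [NormedAddCommGroup X] [NormedSpace ℝ X]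

/-! ### Auxiliary lemmas -/

/-- A real function whose second derivative is bounded below by `m` satisfies the
strong convexity inequality on `[0,1]`, and lies above its tangent with quadratic gap. -/
lemma seg_aux {g g' g'' : ℝ → ℝ} {m : ℝ}
    (hg : ∀ x, HasDerivAt g (g' x) x) (hg' : ∀ x, HasDerivAt g' (g'' x) x)
    (hm : ∀ x, m ≤ g'' x) :
    (∀ θ : ℝ, 0 ≤ θ → θ ≤ 1 →
      g θ ≤ (1 - θ) * g 0 + θ * g 1 - m / 2 * (θ * (1 - θ))) ∧
    g 0 + g' 0 + m / 2 ≤ g 1 := by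
  set G : ℝ → ℝ := fun x => g x - m / 2 * x ^ 2 with hG_def
  set G' : ℝ → ℝ := fun x => g' x - m * x with hG'_def
  have hG : ∀ x, HasDerivAt G (G' x) x := by
    intro x
    have h2 : HasDerivAt (fun x : ℝ => m / 2 * x ^ 2) (m / 2 * (2 * x ^ 1)) x :=
      (hasDerivAt_pow 2 x).const_mul (m / 2)
    have := (hg x).sub h2
    refine this.congr_deriv ?_
    show _ = g' x - m * x; ring
  have hG' : ∀ x, HasDerivAt G' (g'' x - m) x := by
    intro x
    have h2 : HasDerivAt (fun x : ℝ => m * x) (m * 1) x := (hasDerivAt_id x).const_mul m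
    have := (hg' x).sub h2
    exact this.congr_deriv (by ring)
  have hmono : Monotone G' := by
    apply monotone_of_deriv_nonneg
    · exact fun x => (hG' x).differentiableAt
    · intro x
      rw [(hG' x).deriv]
      linarith [hm x]
  have slope : ∀ a b : ℝ, a < b → ∃ c ∈ Set.Ioo a b, G' c = (G b - G a) / (b - a) := by
    intro a b hab
    exact exists_hasDerivAt_eq_slope G G' hab
      (fun x _ => (hG x).continuousAt.continuousWithinAt)
      (fun x _ => hG x)
  constructor
  · intro θ h0 h1
    rcases eq_or_lt_of_le h0 with h|h0'
    · simp [← h]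
    rcases eq_or_lt_of_le h1 with h|h1'
    · subst h; ring_nf; simp
    obtain ⟨c₁, hc₁, he₁⟩ := slope 0 θ h0'
    obtain ⟨c₂, hc₂, he₂⟩ := slope θ 1 h1'
    have hcc : c₁ ≤ c₂ := le_of_lt (lt_trans hc₁.2 hc₂.1)
    have hmono' := hmono hcc
    rw [he₁, he₂] at hmono'
    have key : (G θ - G 0) / (θ - 0) ≤ (G 1 - G θ) / (1 - θ) := hmono'
    rw [div_le_div_iff₀ (by linarith) (by linarith)] at key
    have hGθ : G θ ≤ (1 - θ) * G 0 + θ * G 1 := by nlinarith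
    simp only [G] at hGθ
    nlinarith
  · obtain ⟨c, hc, he⟩ := slope 0 1 one_pos
    have h0c : G' 0 ≤ G' c := hmono (le_of_lt hc.1)
    rw [he] at h0c
    have h0c' : G' 0 ≤ G 1 - G 0 := by norm_num at h0c; linarith
    simp only [G, G'] at h0c'
    nlinarith

/-- Pass to the limit `θ → 0⁺` in a family of inequalities. -/
lemma lim_aux {E D c : ℝ} (hc : 0 ≤ c)
    (h : ∀ θ : ℝ, 0 < θ → θ < 1 → E + (1 - θ) * c ≤ D) : E + c ≤ D := by
  apply le_of_forall_pos_le_add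
  intro ε hε
  have hθ0 : 0 < min (1/2) (ε / (1 + c)) := lt_min (by norm_num) (div_pos hε (by linarith))
  have hθ1 : min (1/2) (ε / (1 + c)) < 1 := lt_of_le_of_lt (min_le_left _ _) (by norm_num)
  have hkey := h _ hθ0 hθ1
  have hbd : min (1/2) (ε / (1 + c)) * c ≤ ε := by
    calc min (1/2) (ε / (1 + c)) * c ≤ (ε / (1 + c)) * c :=
          mul_le_mul_of_nonneg_right (min_le_right _ _) hc
      _ ≤ ε := by
          rw [div_mul_eq_mul_div, div_le_iff₀ (by linarith : (0:ℝ) < 1 + c)]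
          nlinarith
  nlinarith [hkey, hbd]

/-- First and second derivatives of the energy along a line segment. -/
lemma energy_line_deriv (A : Z →L[ℝ] Z →L[ℝ] ℝ) (F : Z → ℝ) (DF : Z → V →L[ℝ] ℝ)
    (D2F : Z → Z →L[ℝ] V →L[ℝ] ℝ) (ℓ : ℝ → V →L[ℝ] ℝ) (ι : Z →L[ℝ] V)
    (hA_symm : ∀ z w : Z, A z w = A w z)
    (hF' : ∀ w : Z, HasFDerivAt F ((DF w).comp ι) w)
    (hDF' : ∀ w : Z, HasFDerivAt DF (D2F w) w)
    (s : ℝ) (a d : Z) :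
    (∀ x : ℝ, HasDerivAt (fun y : ℝ => energy A F ℓ ι s (a + y • d))
      (A (a + x • d) d + DF (a + x • d) (ι d) - ℓ s (ι d)) x) ∧
    (∀ x : ℝ, HasDerivAt (fun y : ℝ => A (a + y • d) d + DF (a + y • d) (ι d) - ℓ s (ι d))
      (A d d + D2F (a + x • d) d (ι d)) x) := by
  have hline : ∀ x : ℝ, HasDerivAt (fun y : ℝ => a + y • d) d x := by
    intro x
    simpa using ((hasDerivAt_id x).smul_const d).const_add a
  have hF : ∀ x : ℝ, HasDerivAt (fun y : ℝ => F (a + y • d)) (DF (a + x • d) (ι d)) x := by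
    intro x
    exact (hF' (a + x • d)).comp_hasDerivAt x (hline x)
  have hDFp : ∀ x : ℝ, HasDerivAt (fun y : ℝ => DF (a + y • d) (ι d))
      (D2F (a + x • d) d (ι d)) x := by
    intro x
    have hL : HasFDerivAt (fun w : Z => DF w (ι d))
        ((ContinuousLinearMap.apply ℝ ℝ (ι d)).comp (D2F (a + x • d))) (a + x • d) :=
      (ContinuousLinearMap.apply ℝ ℝ (ι d)).hasFDerivAt.comp _ (hDF' (a + x • d))
    exact hL.comp_hasDerivAt x (hline x)
  have hAexp : ∀ y : ℝ, A (a + y • d) (a + y • d)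
      = A a a + 2 * y * A a d + y ^ 2 * A d d := by
    intro y
    simp [map_add, _root_.map_smul, ContinuousLinearMap.add_apply,
      ContinuousLinearMap.smul_apply, smul_eq_mul, hA_symm d a]
    ring
  have hAd : ∀ y : ℝ, A (a + y • d) d = A a d + y * A d d := by
    intro y
    simp [map_add, _root_.map_smul, ContinuousLinearMap.add_apply,
      ContinuousLinearMap.smul_apply, smul_eq_mul]
  constructor
  · intro x
    have hfun : (fun y : ℝ => energy A F ℓ ι s (a + y • d))
        = fun y : ℝ => ((1/2 * A a a + y * A a d + y ^ 2 * (1/2 * A d d))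
            - (ℓ s (ι a) + y * ℓ s (ι d))) + F (a + y • d) := by
      funext y
      simp only [energy, map_add, _root_.map_smul, ContinuousLinearMap.add_apply,
        ContinuousLinearMap.smul_apply, smul_eq_mul, hA_symm d a]
      ring
    rw [hfun]
    have h1 : HasDerivAt (fun y : ℝ => y * A a d) (A a d) x := by
      simpa using (hasDerivAt_id x).mul_const (A a d)
    have h2 : HasDerivAt (fun y : ℝ => y ^ 2 * (1/2 * A d d)) (2 * x * (1/2 * A d d)) x := by
      have := (hasDerivAt_pow 2 x).mul_const (1/2 * A d d)
      exact this.congr_deriv (by ring)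
    have h3 : HasDerivAt (fun y : ℝ => ℓ s (ι a) + y * ℓ s (ι d)) (ℓ s (ι d)) x := by
      simpa using ((hasDerivAt_id x).mul_const (ℓ s (ι d))).const_add (ℓ s (ι a))
    have hp := (((h1.const_add (1/2 * A a a)).add h2).sub h3).add (hF x)
    refine hp.congr_deriv ?_
    rw [hAd x]
    ring
  · intro x
    have hfun : (fun y : ℝ => A (a + y • d) d + DF (a + y • d) (ι d) - ℓ s (ι d))
        = fun y : ℝ => (A a d + y * A d d + DF (a + y • d) (ι d)) - ℓ s (ι d) := by
      funext y
      rw [hAd y]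
    rw [hfun]
    have h1 : HasDerivAt (fun y : ℝ => y * A d d) (A d d) x := by
      simpa using (hasDerivAt_id x).mul_const (A d d)
    exact ((h1.const_add (A a d)).add (hDFp x)).sub_const (ℓ s (ι d))

set_option maxHeartbeats 1600000 in
/-- Lemma 3.13: under `κ`-uniform convexity there exists a
constant `C = C(|ℓ|_Lip, κ) > 0`, independent of `τ`, such that
`‖z_k − z_{k−1}‖_Z ≤ C τ` for all iterations `k ≤ N̂(τ)`. -/
theorem statement10
    (ι : Z →L[ℝ] V) (ιX : V →L[ℝ] X)
    (A : Z →L[ℝ] Z →L[ℝ] ℝ) (α : ℝ) (F : Z → ℝ) (DF : Z → V →L[ℝ] ℝ)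
    (D2F : Z → Z →L[ℝ] V →L[ℝ] ℝ) (R : V → ℝ) (ℓ : ℝ → V →L[ℝ] ℝ) (L T : ℝ)
    (hstand : StandingAssumptions ι ιX A α F DF D2F R ℓ L T)
    (κ : ℝ) (hconv : UniformlyConvex A D2F ι κ)
    (z₀ : Z) (hz₀ : LocStable R A DF ℓ ι 0 z₀)
    (t : ℝ → ℕ → ℝ) (z : ℝ → ℕ → Z)
    (hscheme : ∀ τ : ℝ, 0 < τ → Scheme A F R ℓ ι T τ z₀ (t τ) (z τ))
    (N : ℝ → ℕ)
    (hN : ∀ τ : ℝ, 0 < τ → t τ (N τ) = T ∧ ∀ j : ℕ, j < N τ → t τ j < T)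
    (Nhat : ℝ → ℕ)
    (hNhat : ∀ τ : ℝ, 0 < τ → N τ ≤ Nhat τ ∧ 1 ≤ Nhat τ ∧
      LocStable R A DF ℓ ι (t τ (Nhat τ - 1)) (z τ (Nhat τ))) :
    ∃ C : ℝ, 0 < C ∧ ∀ τ : ℝ, 0 < τ → ∀ k : ℕ, 1 ≤ k → k ≤ Nhat τ →
      ‖z τ k - z τ (k - 1)‖ ≤ C * τ := by
  classical
  obtain ⟨hι_inj, -, hι_norm, -, hA_symm, -, -, -, hF', hDF', -, hL0, hℓ_lip, hT,
    hR_conv, -, hR_nonneg, hR_hom, -⟩ := hstand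
  obtain ⟨hκ, hκconv⟩ := hconv
  have hCnn : (0:ℝ) ≤ 2 * L / κ := div_nonneg (by linarith) hκ.le
  refine ⟨2 * L / κ + 1, by linarith, ?_⟩
  intro τ hτ k hk1 hkN
  obtain ⟨ht0, hz0, hstep⟩ := hscheme τ hτ
  set zz : ℕ → Z := z τ with hzz
  set tt : ℕ → ℝ := t τ with htt
  -- basic facts about R
  have hR0 : R 0 = 0 := by
    have := hR_hom 0 0 le_rfl
    simpa using this
  have hRtri : ∀ x y : V, R (x + y) ≤ R x + R y := by
    intro x y
    have hmid := hR_conv.2 (Set.mem_univ x) (Set.mem_univ y)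
      (by norm_num : (0:ℝ) ≤ 1/2) (by norm_num : (0:ℝ) ≤ 1/2) (by norm_num)
    simp only [smul_eq_mul] at hmid
    have h2 := hR_hom 2 ((1/2:ℝ) • x + (1/2:ℝ) • y) (by norm_num)
    have hxy : (2:ℝ) • ((1/2:ℝ) • x + (1/2:ℝ) • y) = x + y := by
      rw [smul_add, smul_smul, smul_smul]
      norm_num
    rw [hxy] at h2
    rw [h2]
    linarith
  have hRcomb : ∀ (θ : ℝ) (x y : V), 0 ≤ θ → θ ≤ 1 →
      R ((1-θ) • x + θ • y) ≤ (1-θ) * R x + θ * R y := by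
    intro θ x y h0 h1
    exact hR_conv.2 (Set.mem_univ x) (Set.mem_univ y) (by linarith) h0 (by ring)
  -- Lipschitz bound for ℓ
  have hℓ_bound : ∀ s u : ℝ, s ∈ Set.Icc 0 T → u ∈ Set.Icc 0 T → ∀ x : V,
      ℓ s x - ℓ u x ≤ L * |s - u| * ‖x‖ := by
    intro s u hs hu x
    have hd : dist (ℓ s) (ℓ u) ≤ L * |s - u| := by
      have := hℓ_lip.dist_le_mul s hs u hu
      rw [Real.dist_eq] at this
      calc dist (ℓ s) (ℓ u) ≤ (Real.toNNReal L : ℝ) * |s - u| := this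
        _ = L * |s - u| := by rw [Real.coe_toNNReal L hL0]
    calc ℓ s x - ℓ u x = (ℓ s - ℓ u) x := by simp
      _ ≤ |(ℓ s - ℓ u) x| := le_abs_self _
      _ = ‖(ℓ s - ℓ u) x‖ := (Real.norm_eq_abs _).symm
      _ ≤ ‖ℓ s - ℓ u‖ * ‖x‖ := (ℓ s - ℓ u).le_opNorm x
      _ = dist (ℓ s) (ℓ u) * ‖x‖ := by rw [dist_eq_norm]
      _ ≤ (L * |s - u|) * ‖x‖ := by
          apply mul_le_mul_of_nonneg_right hd (norm_nonneg _)
  -- strong convexity along segments and tangent inequality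
  have hSC : ∀ (s : ℝ) (a b : Z) (θ : ℝ), 0 ≤ θ → θ ≤ 1 →
      energy A F ℓ ι s (a + θ • (b - a)) ≤ (1-θ) * energy A F ℓ ι s a
        + θ * energy A F ℓ ι s b - κ/2 * (θ * (1-θ)) * ‖b - a‖^2 := by
    intro s a b θ h0 h1
    obtain ⟨hg, hg'⟩ := energy_line_deriv A F DF D2F ℓ ι hA_symm hF' hDF' s a (b - a)
    have hm : ∀ x : ℝ, κ * ‖b - a‖^2 ≤ A (b-a) (b-a) + D2F (a + x • (b-a)) (b-a) (ι (b-a)) :=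
      fun x => hκconv (a + x • (b-a)) (b-a)
    obtain ⟨hcomb, -⟩ := seg_aux hg hg' hm
    have h := hcomb θ h0 h1
    have he0 : a + (0:ℝ) • (b - a) = a := by simp
    have he1 : a + (1:ℝ) • (b - a) = b := by simp
    rw [he0, he1] at h
    calc energy A F ℓ ι s (a + θ • (b - a))
        ≤ (1-θ) * energy A F ℓ ι s a + θ * energy A F ℓ ι s b
          - (κ * ‖b - a‖^2) / 2 * (θ * (1-θ)) := h
      _ = (1-θ) * energy A F ℓ ι s a + θ * energy A F ℓ ι s b
          - κ/2 * (θ * (1-θ)) * ‖b - a‖^2 := by ring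
  have hTL : ∀ (s : ℝ) (a b : Z),
      energy A F ℓ ι s a + (DI A DF ℓ ι s a) (b - a) + κ/2 * ‖b - a‖^2
        ≤ energy A F ℓ ι s b := by
    intro s a b
    obtain ⟨hg, hg'⟩ := energy_line_deriv A F DF D2F ℓ ι hA_symm hF' hDF' s a (b - a)
    have hm : ∀ x : ℝ, κ * ‖b - a‖^2 ≤ A (b-a) (b-a) + D2F (a + x • (b-a)) (b-a) (ι (b-a)) :=
      fun x => hκconv (a + x • (b-a)) (b-a)
    obtain ⟨-, htan⟩ := seg_aux hg hg' hm
    have he0 : a + (0:ℝ) • (b - a) = a := by simp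
    have he1 : a + (1:ℝ) • (b - a) = b := by simp
    rw [he0, he1] at htan
    have hDIe : (DI A DF ℓ ι s a) (b - a)
        = A a (b - a) + DF a (ι (b - a)) - ℓ s (ι (b - a)) := by
      simp [DI, ContinuousLinearMap.sub_apply, ContinuousLinearMap.add_apply,
        ContinuousLinearMap.comp_apply]
    rw [hDIe]
    linarith
  -- time facts
  have hstep1 : ∀ n, ‖ι (zz (n+1) - zz n)‖ ≤ τ := fun n => (hstep n).1
  have htmem : ∀ n, 0 ≤ tt n ∧ tt n ≤ T := by
    intro n
    induction n with
    | zero => rw [ht0]; exact ⟨le_rfl, hT.le⟩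
    | succ n ih =>
      rw [(hstep n).2.2]
      refine ⟨le_min (by linarith [hstep1 n, ih.1]) hT.le, min_le_right _ _⟩
  have htmono : ∀ n, tt n ≤ tt (n+1) := by
    intro n
    rw [(hstep n).2.2]
    exact le_min (by linarith [hstep1 n, (htmem n).1]) (htmem n).2
  have htstep : ∀ n, tt (n+1) - tt n ≤ τ - ‖ι (zz (n+1) - zz n)‖ := by
    intro n
    have h := min_le_left (tt n + τ - ‖ι (zz (n+1) - zz n)‖) T
    rw [← (hstep n).2.2] at h
    linarith
  have htfroz : ∀ n, ‖ι (zz (n+1) - zz n)‖ = τ → tt (n+1) = tt n := by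
    intro n h
    rw [(hstep n).2.2, h]
    have : tt n + τ - τ = tt n := by ring
    rw [this]
    exact min_eq_left (htmem n).2
  -- strengthened minimality inequality
  have hMκ : ∀ (n : ℕ) (w : Z), ‖ι (w - zz n)‖ ≤ τ →
      energy A F ℓ ι (tt n) (zz (n+1)) + R (ι (zz (n+1) - zz n))
          + κ/2 * ‖w - zz (n+1)‖^2
        ≤ energy A F ℓ ι (tt n) w + R (ι (w - zz n)) := by
    intro n w hw
    have hXq0 : (0:ℝ) ≤ ‖w - zz (n+1)‖^2 := sq_nonneg _
    have key : ∀ θ : ℝ, 0 < θ → θ < 1 →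
        energy A F ℓ ι (tt n) (zz (n+1)) + R (ι (zz (n+1) - zz n))
            + κ/2 * (1-θ) * ‖w - zz (n+1)‖^2
          ≤ energy A F ℓ ι (tt n) w + R (ι (w - zz n)) := by
      intro θ h0 h1
      have hco : zz (n+1) + θ • (w - zz (n+1)) - zz n
          = (1-θ) • (zz (n+1) - zz n) + θ • (w - zz n) := by module
      have hball : ‖ι (zz (n+1) + θ • (w - zz (n+1)) - zz n)‖ ≤ τ := by
        rw [hco, map_add, _root_.map_smul, _root_.map_smul]
        calc ‖(1-θ) • ι (zz (n+1) - zz n) + θ • ι (w - zz n)‖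
            ≤ ‖(1-θ) • ι (zz (n+1) - zz n)‖ + ‖θ • ι (w - zz n)‖ := norm_add_le _ _
          _ = (1-θ) * ‖ι (zz (n+1) - zz n)‖ + θ * ‖ι (w - zz n)‖ := by
              rw [norm_smul, norm_smul, Real.norm_eq_abs, Real.norm_eq_abs,
                abs_of_nonneg (by linarith : (0:ℝ) ≤ 1-θ), abs_of_nonneg h0.le]
          _ ≤ (1-θ) * τ + θ * τ := by
              have := hstep1 n
              nlinarith [norm_nonneg (ι (zz (n+1) - zz n)), norm_nonneg (ι (w - zz n))]
          _ = τ := by ring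
      have hmin := (hstep n).2.1 _ hball
      have hI := hSC (tt n) (zz (n+1)) w θ h0.le h1.le
      have hRc : R (ι (zz (n+1) + θ • (w - zz (n+1)) - zz n))
          ≤ (1-θ) * R (ι (zz (n+1) - zz n)) + θ * R (ι (w - zz n)) := by
        rw [hco, map_add, _root_.map_smul, _root_.map_smul]
        exact hRcomb θ _ _ h0.le h1.le
      have h2 : θ * (energy A F ℓ ι (tt n) (zz (n+1)) + R (ι (zz (n+1) - zz n))
            + κ/2 * (1-θ) * ‖w - zz (n+1)‖^2)
          ≤ θ * (energy A F ℓ ι (tt n) w + R (ι (w - zz n))) := by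
        nlinarith [hmin, hI, hRc]
      exact le_of_mul_le_mul_left h2 h0
    have hc0 : 0 ≤ κ/2 * ‖w - zz (n+1)‖^2 := mul_nonneg (by linarith) hXq0
    have key' : ∀ θ : ℝ, 0 < θ → θ < 1 →
        energy A F ℓ ι (tt n) (zz (n+1)) + R (ι (zz (n+1) - zz n))
            + (1-θ) * (κ/2 * ‖w - zz (n+1)‖^2)
          ≤ energy A F ℓ ι (tt n) w + R (ι (w - zz n)) := by
      intro θ h0 h1
      have hk := key θ h0 h1
      have : (1-θ) * (κ/2 * ‖w - zz (n+1)‖^2) = κ/2 * (1-θ) * ‖w - zz (n+1)‖^2 := by ring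
      linarith [hk, this.le, this.ge]
    have hlim := lim_aux hc0 key'
    linarith [hlim]
  -- global κ-stability for iterates with inactive constraint (or the initial state)
  have hGball : ∀ n : ℕ, (n = 0 ∨ ‖ι (zz n - zz (n-1))‖ < τ) → ∀ w : Z,
      energy A F ℓ ι (tt n) (zz n) + κ/2 * ‖w - zz n‖^2
        ≤ energy A F ℓ ι (tt n) w + R (ι (w - zz n)) + L * τ * ‖ι (w - zz n)‖ := by
    intro n hn w
    have hLτ : 0 ≤ L * τ * ‖ι (w - zz n)‖ :=
      mul_nonneg (mul_nonneg hL0 hτ.le) (norm_nonneg _)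
    rcases n with _ | m
    · -- n = 0 : use local stability of z₀
      obtain ⟨ξ, hξ, hsum⟩ := hz₀
      have heval : ξ (ι (w - zz 0)) + (DI A DF ℓ ι 0 z₀) (w - zz 0) = 0 := by
        have h := congrArg (fun f : Z →L[ℝ] ℝ => f (w - zz 0)) hsum
        simpa [ContinuousLinearMap.add_apply, ContinuousLinearMap.comp_apply] using h
      have hξle : ξ (ι (w - zz 0)) ≤ R (ι (w - zz 0)) := by
        have := hξ (ι (w - zz 0))
        simpa [hR0] using this
      have htl := hTL 0 (zz 0) w
      rw [hz0] at htl ⊢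
      rw [ht0]
      rw [hz0] at heval hξle hLτ
      linarith
    · -- n = m+1
      rcases hn with h0 | hlt
      · exact absurd h0 (Nat.succ_ne_zero m)
      have hlt' : ‖ι (zz (m+1) - zz m)‖ < τ := by
        simpa using hlt
      -- ball stability at time tt m around zz (m+1)
      have hstab : ∀ u : Z, ‖ι (u - zz m)‖ ≤ τ →
          energy A F ℓ ι (tt m) (zz (m+1)) + κ/2 * ‖u - zz (m+1)‖^2
            ≤ energy A F ℓ ι (tt m) u + R (ι (u - zz (m+1))) := by
        intro u hu
        have h1 := hMκ m u hu
        have h2 : R (ι (u - zz m)) ≤ R (ι (u - zz (m+1))) + R (ι (zz (m+1) - zz m)) := by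
          have hco : ι (u - zz m) = ι (u - zz (m+1)) + ι (zz (m+1) - zz m) := by
            rw [← map_add]
            congr 1
            abel
          rw [hco]
          exact hRtri _ _
        linarith
      by_cases hw0 : ι (w - zz (m+1)) = 0
      · have hwz : w - zz (m+1) = 0 := hι_inj (by rw [map_zero]; exact hw0)
        have hw' : w = zz (m+1) := by rwa [sub_eq_zero] at hwz
        rw [hw']
        simp only [sub_self, map_zero, norm_zero, hR0]
        norm_num
      · have hm' : 0 < ‖ι (w - zz (m+1))‖ := norm_pos_iff.mpr hw0
        have hr0 : 0 < τ - ‖ι (zz (m+1) - zz m)‖ := by linarith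
        set r : ℝ := τ - ‖ι (zz (m+1) - zz m)‖ with hr_def
        set m' : ℝ := ‖ι (w - zz (m+1))‖ with hm'_def
        set σ : ℝ := min 1 (r / m') with hσ_def
        have hσ0 : 0 < σ := lt_min one_pos (div_pos hr0 hm')
        have hσ1 : σ ≤ 1 := min_le_left _ _
        have hσm' : σ * m' ≤ r := by
          calc σ * m' ≤ (r / m') * m' :=
                mul_le_mul_of_nonneg_right (min_le_right _ _) hm'.le
            _ = r := div_mul_cancel₀ _ (ne_of_gt hm')
        have hu_ball : ‖ι (zz (m+1) + σ • (w - zz (m+1)) - zz m)‖ ≤ τ := by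
          have hco : zz (m+1) + σ • (w - zz (m+1)) - zz m
              = (zz (m+1) - zz m) + σ • (w - zz (m+1)) := by module
          rw [hco, map_add, _root_.map_smul]
          calc ‖ι (zz (m+1) - zz m) + σ • ι (w - zz (m+1))‖
              ≤ ‖ι (zz (m+1) - zz m)‖ + ‖σ • ι (w - zz (m+1))‖ := norm_add_le _ _
            _ = ‖ι (zz (m+1) - zz m)‖ + σ * m' := by
                rw [norm_smul, Real.norm_eq_abs, abs_of_pos hσ0]
            _ ≤ (τ - r) + r := by
                have : ‖ι (zz (m+1) - zz m)‖ = τ - r := by rw [hr_def]; ring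
                linarith
            _ = τ := by ring
        have ha := hstab _ hu_ball
        have hsub : zz (m+1) + σ • (w - zz (m+1)) - zz (m+1) = σ • (w - zz (m+1)) := by
          module
        rw [hsub] at ha
        have hnorm : ‖σ • (w - zz (m+1))‖^2 = σ^2 * ‖w - zz (m+1)‖^2 := by
          rw [norm_smul, Real.norm_eq_abs, abs_of_pos hσ0]
          ring
        have hRσ : R (ι (σ • (w - zz (m+1)))) = σ * R (ι (w - zz (m+1))) := by
          rw [_root_.map_smul]
          exact hR_hom σ _ hσ0.le
        rw [hnorm, hRσ] at ha
        have hIσ := hSC (tt m) (zz (m+1)) w σ hσ0.le hσ1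
        have hdiv : energy A F ℓ ι (tt m) (zz (m+1)) + κ/2 * ‖w - zz (m+1)‖^2
            ≤ energy A F ℓ ι (tt m) w + R (ι (w - zz (m+1))) := by
          have h2 : σ * (energy A F ℓ ι (tt m) (zz (m+1)) + κ/2 * ‖w - zz (m+1)‖^2)
              ≤ σ * (energy A F ℓ ι (tt m) w + R (ι (w - zz (m+1)))) := by
            nlinarith [ha, hIσ, sq_nonneg ‖w - zz (m+1)‖]
          exact le_of_mul_le_mul_left h2 hσ0
        -- time shift from tt m to tt (m+1)
        have htd : tt (m+1) - tt m ≤ τ := by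
          have := htstep m
          have := norm_nonneg (ι (zz (m+1) - zz m))
          linarith
        have htmm : tt m ≤ tt (m+1) := htmono m
        have hshift : ℓ (tt (m+1)) (ι (w - zz (m+1))) - ℓ (tt m) (ι (w - zz (m+1)))
            ≤ L * τ * m' := by
          have hb := hℓ_bound (tt (m+1)) (tt m) ⟨(htmem (m+1)).1, (htmem (m+1)).2⟩
            ⟨(htmem m).1, (htmem m).2⟩ (ι (w - zz (m+1)))
          have habs : |tt (m+1) - tt m| ≤ τ := by
            rw [abs_of_nonneg (by linarith)]
            linarith
          calc ℓ (tt (m+1)) (ι (w - zz (m+1))) - ℓ (tt m) (ι (w - zz (m+1)))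
              ≤ L * |tt (m+1) - tt m| * m' := hb
            _ ≤ L * τ * m' := by
                apply mul_le_mul_of_nonneg_right _ hm'.le
                exact mul_le_mul_of_nonneg_left habs hL0
        have hee : ∀ s' : ℝ, energy A F ℓ ι s' w - energy A F ℓ ι s' (zz (m+1))
            = (energy A F ℓ ι (tt m) w - energy A F ℓ ι (tt m) (zz (m+1)))
              + (ℓ (tt m) (ι (w - zz (m+1))) - ℓ s' (ι (w - zz (m+1)))) := by
          intro s'
          simp only [energy, map_sub]
          ring
        have hfin := hee (tt (m+1))
        linarith [hdiv, hshift, hfin]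
  -- the frozen-time run
  set Pp : ℕ → Prop := fun j => j = 0 ∨ ‖ι (zz j - zz (j-1))‖ < τ with hPp_def
  have hP0 : Pp 0 := Or.inl rfl
  set j : ℕ := Nat.findGreatest Pp (k-1) with hj_def
  have hPj : Pp j := Nat.findGreatest_spec (Nat.zero_le _) hP0
  have hjk : j ≤ k - 1 := Nat.findGreatest_le _
  have hfull : ∀ i, j < i → i ≤ k - 1 → ‖ι (zz i - zz (i-1))‖ = τ := by
    intro i h1 h2
    have hnot : ¬ Pp i := Nat.findGreatest_is_greatest h1 h2
    simp only [hPp_def] at hnot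
    have hi0 : i ≠ 0 := fun h => hnot (Or.inl h)
    have hge0 : ¬ ‖ι (zz i - zz (i-1))‖ < τ := fun h => hnot (Or.inr h)
    have hge : τ ≤ ‖ι (zz i - zz (i-1))‖ := not_lt.mp hge0
    have hii : i - 1 + 1 = i := Nat.succ_pred_eq_of_pos (Nat.pos_of_ne_zero hi0)
    have hle := hstep1 (i-1)
    rw [hii] at hle
    linarith
  have hfroz : ∀ i, j ≤ i → i ≤ k - 1 → tt i = tt j := by
    intro i
    induction i with
    | zero =>
      intro h1 _
      have : j = 0 := Nat.le_zero.mp h1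
      rw [this]
    | succ i ih =>
      intro h1 h2
      rcases Nat.lt_or_ge j (i+1) with hlt | hge
      · have hj_i : j ≤ i := Nat.lt_succ_iff.mp hlt
        have heq := hfull (i+1) hlt h2
        have heq' : ‖ι (zz (i+1) - zz i)‖ = τ := by simpa using heq
        rw [htfroz i heq']
        exact ih hj_i (le_trans (Nat.le_succ i) h2)
      · have : j = i+1 := le_antisymm h1 hge
        rw [this]
  have hchain : ∀ i, j ≤ i → i ≤ k - 1 →
      energy A F ℓ ι (tt j) (zz i) + R (ι (zz i - zz j))
        ≤ energy A F ℓ ι (tt j) (zz j) := by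
    intro i
    induction i with
    | zero =>
      intro h1 _
      have hj0 : j = 0 := Nat.le_zero.mp h1
      rw [hj0]
      simp [hR0]
    | succ i ih =>
      intro h1 h2
      rcases Nat.lt_or_ge j (i+1) with hlt | hge
      · have hj_i : j ≤ i := Nat.lt_succ_iff.mp hlt
        have hik : i ≤ k - 1 := le_trans (Nat.le_succ i) h2
        have hprev := ih hj_i hik
        have hself : ‖ι (zz i - zz i)‖ ≤ τ := by simp [hτ.le]
        have hMk := hMκ i (zz i) hself
        rw [hfroz i hj_i hik] at hMk
        have hRz : R (ι (zz i - zz i)) = 0 := by simp [hR0]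
        have htri : R (ι (zz (i+1) - zz j))
            ≤ R (ι (zz (i+1) - zz i)) + R (ι (zz i - zz j)) := by
          have hco : ι (zz (i+1) - zz j) = ι (zz (i+1) - zz i) + ι (zz i - zz j) := by
            rw [← map_add]
            congr 1
            abel
          rw [hco]
          exact hRtri _ _
        have hsq : 0 ≤ κ/2 * ‖zz i - zz (i+1)‖^2 :=
          mul_nonneg (by linarith) (sq_nonneg _)
        linarith
      · have : j = i+1 := le_antisymm h1 hge
        rw [this]
        simp [hR0]
  -- final assembly
  have hk1' : k - 1 + 1 = k := Nat.succ_pred_eq_of_pos hk1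
  have hq := hchain (k-1) hjk le_rfl
  have hself : ‖ι (zz (k-1) - zz (k-1))‖ ≤ τ := by simp [hτ.le]
  have hMf := hMκ (k-1) (zz (k-1)) hself
  rw [hfroz (k-1) hjk le_rfl, hk1'] at hMf
  have hRz : R (ι (zz (k-1) - zz (k-1))) = 0 := by simp [hR0]
  have hG := hGball j hPj (zz k)
  have htri2 : R (ι (zz k - zz j)) ≤ R (ι (zz k - zz (k-1))) + R (ι (zz (k-1) - zz j)) := by
    have hco : ι (zz k - zz j) = ι (zz k - zz (k-1)) + ι (zz (k-1) - zz j) := by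
      rw [← map_add]
      congr 1
      abel
    rw [hco]
    exact hRtri _ _
  have hSle : ‖ι (zz k - zz j)‖ ≤ ‖zz k - zz j‖ := hι_norm _
  have hrev : ‖zz (k-1) - zz k‖ = ‖zz k - zz (k-1)‖ := norm_sub_rev _ _
  rw [hrev] at hMf
  have hLτS : L * τ * ‖ι (zz k - zz j)‖ ≤ L * τ * ‖zz k - zz j‖ :=
    mul_le_mul_of_nonneg_left hSle (mul_nonneg hL0 hτ.le)
  have hRk1 : 0 ≤ R (ι (zz (k-1) - zz j)) := hR_nonneg _
  have hmain : κ/2 * ‖zz k - zz j‖^2 + κ/2 * ‖zz k - zz (k-1)‖^2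
      ≤ L * τ * ‖zz k - zz j‖ := by
    linarith [hq, hMf, hG, htri2, hLτS, hRk1]
  set S : ℝ := ‖zz k - zz j‖ with hS_def
  set a : ℝ := ‖zz k - zz (k-1)‖ with ha_def
  have hS0 : 0 ≤ S := norm_nonneg _
  have ha0 : 0 ≤ a := norm_nonneg _
  have hS' : κ * S^2 ≤ 2 * L * τ * S := by nlinarith [hmain, sq_nonneg a]
  have hκS : κ * S ≤ 2 * L * τ := by
    rcases eq_or_lt_of_le hS0 with h | h
    · rw [← h]
      have : (0:ℝ) ≤ 2 * L * τ := by positivity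
      linarith
    · have hmul : (κ * S) * S ≤ (2 * L * τ) * S := by nlinarith [hS']
      exact le_of_mul_le_mul_right hmul h
  have ha' : κ/2 * a^2 ≤ L * τ * S := by linarith [hmain, mul_nonneg hκ.le (sq_nonneg S)]
  have h1 : κ * (κ/2 * a^2) ≤ κ * (L * τ * S) := mul_le_mul_of_nonneg_left ha' hκ.le
  have h2 : L * τ * (κ * S) ≤ L * τ * (2 * L * τ) :=
    mul_le_mul_of_nonneg_left hκS (mul_nonneg hL0 hτ.le)
  have hκa2 : (κ * a)^2 ≤ (2 * L * τ)^2 := by nlinarith [h1, h2]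
  have hκa : κ * a ≤ 2 * L * τ :=
    (pow_le_pow_iff_left₀ (mul_nonneg hκ.le ha0)
      (by positivity) two_ne_zero).mp hκa2
  have : a ≤ 2 * L / κ * τ := by
    rw [div_mul_eq_mul_div, le_div_iff₀ hκ]
    linarith [hκa]
  have hfin : a ≤ (2 * L / κ + 1) * τ := by nlinarith [hτ.le]
  exact hfin

end RIS
end
end

section
/- Without any convexity assumption on the energy, if an iterate z_k of the local incremental minimization scheme is locally stable, i.e. 0 ∈ ∂R(0) + D_zI(t_{k−1},z_k), then ‖z_{k+1} − z_k‖_Z ≤ C_loc τ for a constant C_loc > 0 depending only on F, the coercivity constant α of A and |ℓ|_Lip (one may take C_loc = √((2/α)(C_{F,α} + |ℓ|_Lip))). -/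
open MeasureTheory
open scoped RealInnerProductSpace NNReal

noncomputable section

namespace RIS

variable {Z V X : Type*}
  [NormedAddCommGroup Z] [InnerProductSpace ℝ Z] [CompleteSpace Z]
  [NormedAddCommGroup V] [InnerProductSpace ℝ V] [CompleteSpace V]
  [NormedAddCommGroup X] [NormedSpace ℝ X]

/-- Auxiliary: solving the quadratic inequality `a/2 x² ≤ K + c x`. -/
private lemma quad_le {a c K x B : ℝ} (ha : 0 < a) (hx : 0 ≤ x) (hB : 0 ≤ B)
    (h1 : a / 2 * x ^ 2 ≤ K + c * x) (h2 : a * K + c ^ 2 ≤ a ^ 2 / 4 * B ^ 2) :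
    x ≤ B := by
  have hx2 : a ^ 2 * x ^ 2 ≤ a ^ 2 * B ^ 2 := by
    nlinarith [mul_le_mul_of_nonneg_left h1 ha.le, sq_nonneg (a * x - 2 * c)]
  have hxB : x ^ 2 ≤ B ^ 2 := le_of_mul_le_mul_left hx2 (by positivity)
  calc x = Real.sqrt (x ^ 2) := (Real.sqrt_sq hx).symm
    _ ≤ Real.sqrt (B ^ 2) := Real.sqrt_le_sqrt hxB
    _ = B := Real.sqrt_sq hB

set_option maxHeartbeats 2000000 in
/-- Lemma 3.18: without any convexity assumption on the energy,
if an iterate `z_k` of the local incremental minimization scheme is locally stable,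
i.e. `0 ∈ ∂R(0) + D_zI(t_{k−1},z_k)`, then `‖z_{k+1} − z_k‖_Z ≤ C_loc τ` for a
constant `C_loc > 0` depending only on `F`, the coercivity constant `α` of `A`
and `|ℓ|_Lip`, but not on `τ` or `k`. -/
theorem statement13
    (ι : Z →L[ℝ] V) (ιX : V →L[ℝ] X)
    (A : Z →L[ℝ] Z →L[ℝ] ℝ) (α : ℝ) (F : Z → ℝ) (DF : Z → V →L[ℝ] ℝ)
    (D2F : Z → Z →L[ℝ] V →L[ℝ] ℝ) (R : V → ℝ) (ℓ : ℝ → V →L[ℝ] ℝ) (L T : ℝ)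
    (hstand : StandingAssumptions ι ιX A α F DF D2F R ℓ L T)
    (z₀ : Z) (hz₀ : LocStable R A DF ℓ ι 0 z₀)
    (t : ℝ → ℕ → ℝ) (z : ℝ → ℕ → Z)
    (hscheme : ∀ τ : ℝ, 0 < τ → Scheme A F R ℓ ι T τ z₀ (t τ) (z τ)) :
    ∃ Cloc : ℝ, 0 < Cloc ∧ ∀ τ : ℝ, 0 < τ → ∀ k : ℕ, 1 ≤ k →
      LocStable R A DF ℓ ι (t τ (k - 1)) (z τ k) →
      ‖z τ (k + 1) - z τ k‖ ≤ Cloc * τ := by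
  obtain ⟨hιinj, hιdense, hιnorm, hXinj, hAsymm, hα, hAcoer, hFpos, hF, hD2F,
    ⟨CF, q, hCF, hq, hD2Fb⟩, hL, hℓlip, hT, hRconv, hRlsc, hRpos, hRhom, hρ⟩ := hstand
  have hq0 : (0 : ℝ) ≤ q := zero_le_one.trans hq
  set Λ : ℝ := ‖ℓ 0‖ + L * T with hΛdef
  set E₀ : ℝ := energy A F ℓ ι 0 z₀ with hE₀def
  set K : ℝ := |E₀| with hKdef
  set c : ℝ := Λ + L * T with hcdef
  set s₀ : ℝ := Real.sqrt ((4 / α) * (K + c ^ 2 / α)) with hs₀def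
  set B : ℝ := 4 * L * T / α + s₀ with hBdef
  set C1 : ℝ := CF * (1 + B ^ q) with hC1def
  clear_value Λ E₀ K c s₀ B C1
  have hEK : E₀ ≤ K := by rw [hKdef]; exact le_abs_self _
  have hLT : (0 : ℝ) ≤ L * T := mul_nonneg hL hT.le
  have hΛ0 : (0 : ℝ) ≤ Λ := by rw [hΛdef]; exact add_nonneg (norm_nonneg _) hLT
  have hc0 : (0 : ℝ) ≤ c := by rw [hcdef]; exact add_nonneg hΛ0 hLT
  have hK0 : (0 : ℝ) ≤ K := by rw [hKdef]; exact abs_nonneg _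
  have hs₀0 : (0 : ℝ) ≤ s₀ := by rw [hs₀def]; exact Real.sqrt_nonneg _
  have hB0 : (0 : ℝ) ≤ B := by
    rw [hBdef]
    exact add_nonneg (div_nonneg (by linarith) hα.le) hs₀0
  have hBq0 : (0 : ℝ) ≤ B ^ q := Real.rpow_nonneg hB0 q
  have hC1pos : (0 : ℝ) < C1 := by rw [hC1def]; exact mul_pos hCF (by linarith)
  have hClocpos : (0 : ℝ) < 2 / α * (C1 + L) :=
    mul_pos (div_pos two_pos hα) (by linarith)
  -- The key quadratic inequality satisfied by `B`.
  have hBkey : α * (K + L * T * B) + c ^ 2 ≤ α ^ 2 / 4 * B ^ 2 := by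
    have hs₀sq : s₀ ^ 2 = (4 / α) * (K + c ^ 2 / α) := by
      rw [hs₀def]
      exact Real.sq_sqrt (mul_nonneg (div_nonneg (by norm_num) hα.le)
        (add_nonneg hK0 (div_nonneg (sq_nonneg c) hα.le)))
    have e1 : α ^ 2 / 4 * s₀ ^ 2 = α * K + c ^ 2 := by
      rw [hs₀sq]; field_simp
    have e2 : α ^ 2 / 4 * B ^ 2 =
        4 * L ^ 2 * T ^ 2 + 2 * α * L * T * s₀ + α ^ 2 / 4 * s₀ ^ 2 := by
      rw [hBdef]; field_simp; ring
    have e3 : α * (K + L * T * B) =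
        α * K + 4 * L ^ 2 * T ^ 2 + α * L * T * s₀ := by
      rw [hBdef]; field_simp; ring
    nlinarith [mul_nonneg (mul_nonneg (mul_nonneg hα.le hL) hT.le) hs₀0]
  -- Real-valued Lipschitz estimate for `ℓ`.
  have hlip : ∀ a b : ℝ, a ∈ Set.Icc 0 T → b ∈ Set.Icc 0 T →
      ‖ℓ a - ℓ b‖ ≤ L * |a - b| := by
    intro a b ha hb
    have h := hℓlip.dist_le_mul a ha b hb
    rw [dist_eq_norm, Real.dist_eq] at h
    calc ‖ℓ a - ℓ b‖ ≤ (Real.toNNReal L : ℝ) * |a - b| := h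
      _ = L * |a - b| := by rw [Real.coe_toNNReal L hL]
  have hΛb : ∀ s ∈ Set.Icc (0 : ℝ) T, ‖ℓ s‖ ≤ Λ := by
    intro s hs
    have h := hlip s 0 hs ⟨le_rfl, hT.le⟩
    have h2 : ‖ℓ s‖ ≤ ‖ℓ s - ℓ 0‖ + ‖ℓ 0‖ := by
      simpa using norm_add_le (ℓ s - ℓ 0) (ℓ 0)
    have h3 : |s - 0| ≤ T := by rw [sub_zero, abs_of_nonneg hs.1]; exact hs.2
    have h4 : L * |s - 0| ≤ L * T := mul_le_mul_of_nonneg_left h3 hL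
    rw [hΛdef]; linarith
  -- Coercivity of the energy.
  have hcoer : ∀ s ∈ Set.Icc (0 : ℝ) T, ∀ w : Z,
      α / 2 * ‖w‖ ^ 2 - Λ * ‖w‖ ≤ energy A F ℓ ι s w := by
    intro s hs w
    have h1 : α * ‖w‖ ^ 2 ≤ A w w := hAcoer w
    have h2 : ℓ s (ι w) ≤ Λ * ‖w‖ := by
      calc ℓ s (ι w) ≤ ‖ℓ s (ι w)‖ := le_abs_self _
        _ ≤ ‖ℓ s‖ * ‖ι w‖ := ContinuousLinearMap.le_opNorm _ _
        _ ≤ Λ * ‖w‖ :=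
          mul_le_mul (hΛb s hs) (hιnorm w) (norm_nonneg _) hΛ0
    have h3 : 0 ≤ F w := hFpos w
    simp only [energy]; linarith
  -- Operator norm bound on `D²F` on the ball of radius `B`.
  have hD2Fop : ∀ w : Z, ‖w‖ ≤ B → ‖D2F w‖ ≤ C1 := by
    intro w hw
    apply ContinuousLinearMap.opNorm_le_bound _ hC1pos.le
    intro u
    have h1 : ‖w‖ ^ q ≤ B ^ q := Real.rpow_le_rpow (norm_nonneg _) hw hq0
    have h2 : CF * (1 + ‖w‖ ^ q) ≤ C1 := by
      rw [hC1def]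
      exact mul_le_mul_of_nonneg_left (by linarith) hCF.le
    calc ‖D2F w u‖ ≤ CF * (1 + ‖w‖ ^ q) * ‖u‖ := hD2Fb w u
      _ ≤ C1 * ‖u‖ := mul_le_mul_of_nonneg_right h2 (norm_nonneg u)
  -- `DF` is Lipschitz on the ball of radius `B`.
  have hDFlip : ∀ u w : Z, ‖u‖ ≤ B → ‖w‖ ≤ B → ‖DF w - DF u‖ ≤ C1 * ‖w - u‖ := by
    intro u w hu hw
    exact Convex.norm_image_sub_le_of_norm_hasFDerivWithin_le
      (fun x _ => (hD2F x).hasFDerivWithinAt)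
      (fun x hx => hD2Fop x (mem_closedBall_zero_iff.mp hx))
      (convex_closedBall 0 B) (mem_closedBall_zero_iff.mpr hu)
      (mem_closedBall_zero_iff.mpr hw)
  -- Taylor estimate for `F`.
  have hTay : ∀ zk vv : Z, ‖zk‖ ≤ B → ‖zk + vv‖ ≤ B →
      DF zk (ι vv) - (F (zk + vv) - F zk) ≤ C1 * ‖vv‖ * ‖ι vv‖ := by
    intro zk vv h1 h2
    have hseg : ∀ s ∈ Set.Icc (0 : ℝ) 1, ‖zk + s • vv‖ ≤ B := by
      intro s hs
      have heq : zk + s • vv = (1 - s) • zk + s • (zk + vv) := by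
        rw [smul_add, sub_smul, one_smul]; abel
      rw [heq]
      calc ‖(1 - s) • zk + s • (zk + vv)‖
          ≤ ‖(1 - s) • zk‖ + ‖s • (zk + vv)‖ := norm_add_le _ _
        _ = (1 - s) * ‖zk‖ + s * ‖zk + vv‖ := by
            rw [norm_smul, norm_smul, Real.norm_eq_abs, Real.norm_eq_abs,
              abs_of_nonneg (by linarith [hs.2]), abs_of_nonneg hs.1]
        _ ≤ B := by nlinarith [hs.1, hs.2]
    have hderiv : ∀ s ∈ Set.Icc (0 : ℝ) 1,
        HasDerivWithinAt (fun s : ℝ => F (zk + s • vv) - s * (DF zk (ι vv)))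
        ((fun s : ℝ => DF (zk + s • vv) (ι vv) - DF zk (ι vv)) s) (Set.Icc 0 1) s := by
      intro s hs
      have hline : HasDerivAt (fun s : ℝ => zk + s • vv) vv s := by
        simpa using ((hasDerivAt_id s).smul_const vv).const_add zk
      have hcomp : HasDerivAt (fun s : ℝ => F (zk + s • vv))
          (DF (zk + s • vv) (ι vv)) s := by
        exact (hF (zk + s • vv)).comp_hasDerivAt s hline
      exact ((hcomp.sub (hasDerivAt_mul_const (DF zk (ι vv))))).hasDerivWithinAt
    have hbnd : ∀ s ∈ Set.Icc (0 : ℝ) 1,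
        ‖(fun s : ℝ => DF (zk + s • vv) (ι vv) - DF zk (ι vv)) s‖ ≤ C1 * ‖vv‖ * ‖ι vv‖ := by
      intro s hs
      have h3 : DF (zk + s • vv) (ι vv) - DF zk (ι vv)
          = (DF (zk + s • vv) - DF zk) (ι vv) := by
        simp [ContinuousLinearMap.sub_apply]
      have h4 : ‖DF (zk + s • vv) - DF zk‖ ≤ C1 * ‖s • vv‖ := by
        have := hDFlip zk (zk + s • vv) h1 (hseg s hs)
        simpa [add_sub_cancel_left] using this
      have h5 : ‖s • vv‖ ≤ ‖vv‖ := by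
        rw [norm_smul, Real.norm_eq_abs, abs_of_nonneg hs.1]
        nlinarith [hs.2, norm_nonneg vv, hs.1]
      calc ‖DF (zk + s • vv) (ι vv) - DF zk (ι vv)‖
          = ‖(DF (zk + s • vv) - DF zk) (ι vv)‖ := by rw [h3]
        _ ≤ ‖DF (zk + s • vv) - DF zk‖ * ‖ι vv‖ := ContinuousLinearMap.le_opNorm _ _
        _ ≤ (C1 * ‖s • vv‖) * ‖ι vv‖ := mul_le_mul_of_nonneg_right h4 (norm_nonneg _)
        _ ≤ C1 * ‖vv‖ * ‖ι vv‖ := by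
            have : C1 * ‖s • vv‖ ≤ C1 * ‖vv‖ := mul_le_mul_of_nonneg_left h5 hC1pos.le
            exact mul_le_mul_of_nonneg_right this (norm_nonneg _)
    have hmvt := Convex.norm_image_sub_le_of_norm_hasDerivWithin_le hderiv hbnd
      (convex_Icc 0 1) (Set.left_mem_Icc.mpr zero_le_one) (Set.right_mem_Icc.mpr zero_le_one)
    simp only [one_smul, zero_smul, add_zero, one_mul, zero_mul, sub_zero] at hmvt
    have habs : |F (zk + vv) - DF zk (ι vv) - F zk| ≤ C1 * ‖vv‖ * ‖ι vv‖ := by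
      simpa [Real.norm_eq_abs] using hmvt
    have h6 := neg_abs_le (F (zk + vv) - DF zk (ι vv) - F zk)
    linarith
  -- `R 0 = 0`.
  have hR0 : R 0 = 0 := by
    have := hRhom 0 0 le_rfl
    simpa using this
  refine ⟨2 / α * (C1 + L), hClocpos, ?_⟩
  intro τ hτ k hk hstab
  obtain ⟨ht0, hz0, hstep⟩ := hscheme τ hτ
  -- Time bounds.
  have htIcc : ∀ n, t τ n ∈ Set.Icc (0 : ℝ) T := by
    intro n; induction n with
    | zero => rw [ht0]; exact ⟨le_rfl, hT.le⟩
    | succ n ih =>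
      rw [(hstep n).2.2]
      have hnn := norm_nonneg (ι (z τ (n + 1) - z τ n))
      have hs1 := (hstep n).1
      exact ⟨le_min (by linarith [ih.1]) hT.le, min_le_right _ _⟩
  have htmono : ∀ n, t τ n ≤ t τ (n + 1) := by
    intro n; rw [(hstep n).2.2]
    exact le_min (by linarith [(hstep n).1]) (htIcc n).2
  have htstep : ∀ n, t τ (n + 1) ≤ t τ n + τ := by
    intro n; rw [(hstep n).2.2]
    exact (min_le_left _ _).trans (by linarith [norm_nonneg (ι (z τ (n + 1) - z τ n))])
  -- Energy decrease at fixed time.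
  have hdec : ∀ n, energy A F ℓ ι (t τ n) (z τ (n + 1)) ≤ energy A F ℓ ι (t τ n) (z τ n) := by
    intro n
    have h := (hstep n).2.1 (z τ n) (by simpa using hτ.le)
    have h0 : R (ι (z τ n - z τ n)) = 0 := by simp [hR0]
    rw [h0] at h
    linarith [hRpos (ι (z τ (n + 1) - z τ n))]
  -- Energy shift in time.
  have hEshift : ∀ n, ∀ w : Z, energy A F ℓ ι (t τ (n + 1)) w ≤
      energy A F ℓ ι (t τ n) w + L * (t τ (n + 1) - t τ n) * ‖w‖ := by
    intro n w
    have h1 : ‖ℓ (t τ n) - ℓ (t τ (n + 1))‖ ≤ L * (t τ (n + 1) - t τ n) := by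
      have h := hlip (t τ n) (t τ (n + 1)) (htIcc n) (htIcc (n + 1))
      rwa [abs_of_nonpos (by linarith [htmono n]), neg_sub] at h
    have h2 : ℓ (t τ n) (ι w) - ℓ (t τ (n + 1)) (ι w) ≤
        L * (t τ (n + 1) - t τ n) * ‖w‖ := by
      calc ℓ (t τ n) (ι w) - ℓ (t τ (n + 1)) (ι w)
          = (ℓ (t τ n) - ℓ (t τ (n + 1))) (ι w) := by
            simp [ContinuousLinearMap.sub_apply]
        _ ≤ ‖(ℓ (t τ n) - ℓ (t τ (n + 1))) (ι w)‖ := le_abs_self _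
        _ ≤ ‖ℓ (t τ n) - ℓ (t τ (n + 1))‖ * ‖ι w‖ := ContinuousLinearMap.le_opNorm _ _
        _ ≤ (L * (t τ (n + 1) - t τ n)) * ‖w‖ :=
            mul_le_mul h1 (hιnorm w) (norm_nonneg _)
              (mul_nonneg hL (by linarith [htmono n]))
    simp only [energy]; linarith
  -- A priori bound on the iterates.
  have hzB : ∀ n, ‖z τ n‖ ≤ B ∧
      energy A F ℓ ι (t τ n) (z τ n) ≤ E₀ + L * t τ n * B := by
    intro n; induction n with
    | zero =>
      rw [ht0, hz0]
      constructor
      · apply quad_le hα (norm_nonneg _) hB0 ?_ hBkey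
        have hco := hcoer 0 ⟨le_rfl, hT.le⟩ z₀
        have h1 : E₀ ≤ K := hEK
        have h2 : Λ * ‖z₀‖ ≤ c * ‖z₀‖ :=
          mul_le_mul_of_nonneg_right (by rw [hcdef]; linarith) (norm_nonneg _)
        have h3 : (0 : ℝ) ≤ L * T * B := mul_nonneg hLT hB0
        rw [← hE₀def] at hco
        linarith
      · rw [← hE₀def]; simp
    | succ n ih =>
      have hE1 : energy A F ℓ ι (t τ (n + 1)) (z τ (n + 1)) ≤
          E₀ + L * t τ n * B + L * (t τ (n + 1) - t τ n) * ‖z τ (n + 1)‖ := by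
        have h := hEshift n (z τ (n + 1))
        linarith [hdec n, ih.2]
      have hx : ‖z τ (n + 1)‖ ≤ B := by
        apply quad_le hα (norm_nonneg _) hB0 ?_ hBkey
        have hco := hcoer (t τ (n + 1)) (htIcc (n + 1)) (z τ (n + 1))
        have e1 : L * t τ n * B ≤ L * T * B :=
          mul_le_mul_of_nonneg_right (mul_le_mul_of_nonneg_left (htIcc n).2 hL) hB0
        have e2 : L * (t τ (n + 1) - t τ n) * ‖z τ (n + 1)‖ ≤
            L * T * ‖z τ (n + 1)‖ := by
          apply mul_le_mul_of_nonneg_right _ (norm_nonneg _)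
          apply mul_le_mul_of_nonneg_left _ hL
          linarith [(htIcc (n + 1)).2, (htIcc n).1]
        have e3 : Λ * ‖z τ (n + 1)‖ + L * T * ‖z τ (n + 1)‖ = c * ‖z τ (n + 1)‖ := by
          rw [hcdef]; ring
        linarith [hEK]
      refine ⟨hx, ?_⟩
      have h2 : L * (t τ (n + 1) - t τ n) * ‖z τ (n + 1)‖ ≤
          L * (t τ (n + 1) - t τ n) * B :=
        mul_le_mul_of_nonneg_left hx (mul_nonneg hL (by linarith [htmono n]))
      have h3 : L * t τ n * B + L * (t τ (n + 1) - t τ n) * B = L * t τ (n + 1) * B := by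
        ring
      linarith
  -- Main estimate.
  obtain ⟨m, rfl⟩ : ∃ m, k = m + 1 := ⟨k - 1, (Nat.succ_pred_eq_of_pos hk).symm⟩
  simp only [Nat.add_sub_cancel] at hstab
  set vv : Z := z τ (m + 1 + 1) - z τ (m + 1) with hvvdef
  have hz1 : z τ (m + 1 + 1) = z τ (m + 1) + vv := by rw [hvvdef]; abel
  -- Minimality inequality with competitor `z_{k}`.
  have hmin := (hstep (m + 1)).2.1 (z τ (m + 1)) (by simpa using hτ.le)
  have h0 : R (ι (z τ (m + 1) - z τ (m + 1))) = 0 := by simp [hR0]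
  rw [h0] at hmin
  rw [← hvvdef] at hmin
  have hVτ : ‖ι vv‖ ≤ τ := (hstep (m + 1)).1
  -- Energy expansion.
  have hexp : energy A F ℓ ι (t τ (m + 1)) (z τ (m + 1 + 1))
      = energy A F ℓ ι (t τ (m + 1)) (z τ (m + 1)) +
        (A (z τ (m + 1)) vv + 1 / 2 * A vv vv +
          (F (z τ (m + 1 + 1)) - F (z τ (m + 1))) - ℓ (t τ (m + 1)) (ι vv)) := by
    have ha : A (z τ (m + 1 + 1)) (z τ (m + 1 + 1)) =
        A (z τ (m + 1)) (z τ (m + 1)) + 2 * A (z τ (m + 1)) vv + A vv vv := by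
      rw [hz1]
      simp only [map_add, ContinuousLinearMap.add_apply]
      linarith [hAsymm vv (z τ (m + 1))]
    have hb : ℓ (t τ (m + 1)) (ι (z τ (m + 1 + 1))) =
        ℓ (t τ (m + 1)) (ι (z τ (m + 1))) + ℓ (t τ (m + 1)) (ι vv) := by
      rw [hz1]; simp
    simp only [energy]
    rw [ha, hb]; ring
  -- Stability of `z_k`.
  obtain ⟨ξ, hξ, hξ0⟩ := hstab
  simp only [subdiff, Set.mem_setOf_eq] at hξ
  have hξv : ξ (ι vv) ≤ R (ι vv) := by
    have := hξ (ι vv)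
    rw [hR0, sub_zero] at this
    linarith
  have hzero : ξ (ι vv) + (A (z τ (m + 1)) vv + DF (z τ (m + 1)) (ι vv)
      - ℓ (t τ m) (ι vv)) = 0 := by
    have := ContinuousLinearMap.ext_iff.mp hξ0 vv
    simpa [DI, ContinuousLinearMap.add_apply, ContinuousLinearMap.sub_apply,
      ContinuousLinearMap.comp_apply] using this
  -- Taylor bound.
  have hTB : DF (z τ (m + 1)) (ι vv) - (F (z τ (m + 1 + 1)) - F (z τ (m + 1)))
      ≤ C1 * ‖vv‖ * τ := by
    have h1 := hTay (z τ (m + 1)) vv (hzB (m + 1)).1 (by rw [← hz1]; exact (hzB (m + 1 + 1)).1)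
    rw [← hz1] at h1
    calc DF (z τ (m + 1)) (ι vv) - (F (z τ (m + 1 + 1)) - F (z τ (m + 1)))
        ≤ C1 * ‖vv‖ * ‖ι vv‖ := h1
      _ ≤ C1 * ‖vv‖ * τ :=
        mul_le_mul_of_nonneg_left hVτ (mul_nonneg hC1pos.le (norm_nonneg _))
  -- Load increment bound.
  have hld : ℓ (t τ (m + 1)) (ι vv) - ℓ (t τ m) (ι vv) ≤ L * τ * ‖vv‖ := by
    have h1 : ‖ℓ (t τ (m + 1)) - ℓ (t τ m)‖ ≤ L * (t τ (m + 1) - t τ m) := by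
      have h := hlip (t τ (m + 1)) (t τ m) (htIcc (m + 1)) (htIcc m)
      rwa [abs_of_nonneg (by linarith [htmono m])] at h
    have h2 : L * (t τ (m + 1) - t τ m) ≤ L * τ :=
      mul_le_mul_of_nonneg_left (by linarith [htstep m]) hL
    calc ℓ (t τ (m + 1)) (ι vv) - ℓ (t τ m) (ι vv)
        = (ℓ (t τ (m + 1)) - ℓ (t τ m)) (ι vv) := by
          simp [ContinuousLinearMap.sub_apply]
      _ ≤ ‖(ℓ (t τ (m + 1)) - ℓ (t τ m)) (ι vv)‖ := le_abs_self _
      _ ≤ ‖ℓ (t τ (m + 1)) - ℓ (t τ m)‖ * ‖ι vv‖ := ContinuousLinearMap.le_opNorm _ _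
      _ ≤ (L * τ) * ‖vv‖ :=
          mul_le_mul (h1.trans h2) (hιnorm vv) (norm_nonneg _)
            (mul_nonneg hL hτ.le)
  have hAv : α * ‖vv‖ ^ 2 ≤ A vv vv := hAcoer vv
  -- Combine everything.
  have hfinal : α / 2 * ‖vv‖ ^ 2 ≤ (C1 + L) * τ * ‖vv‖ := by
    linarith [hmin, hexp, hzero, hξv, hTB, hld, hAv]
  rcases (norm_nonneg vv).eq_or_lt with h | h
  · rw [← h]; positivity
  · have h7 : α * ‖vv‖ ≤ 2 * (C1 + L) * τ := by nlinarith
    have h8 : ‖vv‖ ≤ 2 * (C1 + L) * τ / α := by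
      rw [le_div_iff₀ hα]; linarith
    have h9 : 2 / α * (C1 + L) * τ = 2 * (C1 + L) * τ / α := by ring
    rw [h9]; exact h8

end RIS
end
end
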